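/- arXiv:math/0603735 — 9 statements merged into one kernel-verified Lean document; each statement's English description precedes it below -/
import Mathlib

section
/- Let X be a Banach space and f : [0,1] → X an arbitrary function. If C is the set of points x ∈ [0,1] where the derivative f'(x) exists and equals 0, then the one-dimensional Hausdorff measure of f(C) is zero. -/
/-!
Where `f' = 0`, for every `ε > 0` each point of `s` has a neighbourhood on which
`‖f y - f x‖ ≤ ε |y - x|`. Sorting the points of `s` by the size of that neighbourhood writes `s`
as an increasing union of sets `D` with a uniform scale `δ`, and cutting `D` into intervals of
length `δ` makes `f` an `ε`-Lipschitz map on each piece. Hence `μH[1] (f '' s) ≤ ε * volume s`,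
which is `0` once `s` is cut into pieces of finite length.
-/

open MeasureTheory Set Filter Topology
open scoped NNReal ENNReal

section Lipschitz

variable {X : Type*} [MetricSpace X] [MeasurableSpace X] [BorelSpace X] {f : ℝ → X} {s : Set ℝ}
  {ε : ℝ≥0} {δ : ℝ}

/-- Cut `s` by a partition of `ℝ` into intervals of length `δ`; since the intervals are measurable,
the measures of the pieces add up to `volume s` even when `s` is not measurable. -/
theorem hausdorffMeasure_image_le_mul_volume_of_dist_le (hδ : 0 < δ)
    (h : ∀ x ∈ s, ∀ y ∈ s, dist y x ≤ δ → dist (f y) (f x) ≤ ε * dist y x) :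
    μH[1] (f '' s) ≤ ε * volume s := by
  set I : ℤ → Set ℝ := fun k => Ico (k • δ) ((k + 1) • δ)
  have hlip (k : ℤ) : LipschitzOnWith ε f (s ∩ I k) := by
    refine LipschitzOnWith.of_dist_le_mul fun x hx y hy => ?_
    rw [dist_comm x, dist_comm (f x)]
    refine h x hx.1 y hy.1 ((Real.dist_le_of_mem_Icc (Ico_subset_Icc_self hy.2)
      (Ico_subset_Icc_self hx.2)).trans_eq ?_)
    rw [add_smul, one_smul, add_sub_cancel_left]
  set T := toMeasurable volume s
  calc μH[1] (f '' s) ≤ ∑' k, μH[1] (f '' (s ∩ I k)) := by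
        refine (measure_mono ?_).trans (measure_iUnion_le _)
        rw [← image_iUnion, ← inter_iUnion, iUnion_Ico_zsmul hδ, inter_univ]
    _ ≤ ∑' k, ε * volume (s ∩ I k) := by
        gcongr with k
        simpa [hausdorffMeasure_real] using (hlip k).hausdorffMeasure_image_le zero_le_one
    _ = ∑' k, ε * volume (T ∩ I k) := by
        refine tsum_congr fun k => ?_
        rw [Measure.measure_toMeasurable_inter_of_sFinite measurableSet_Ico]
    _ = ε * volume s := by
        rw [ENNReal.tsum_mul_left, ← measure_iUnion, ← inter_iUnion, iUnion_Ico_zsmul hδ,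
          inter_univ, measure_toMeasurable]
        · exact fun i j hij => ((pairwise_disjoint_Ico_zsmul δ) hij).mono
            inter_subset_right inter_subset_right
        · exact fun k => (measurableSet_toMeasurable _ _).inter measurableSet_Ico

end Lipschitz

section DerivZero

variable {X : Type*} [NormedAddCommGroup X] [NormedSpace ℝ X] {f : ℝ → X} {s : Set ℝ}

theorem HasDerivWithinAt.exists_nat_forall_dist_le_mul_of_zero {x : ℝ}
    (hf : HasDerivWithinAt f 0 s x) {ε : ℝ} (hε : 0 < ε) :
    ∃ n : ℕ, ∀ y ∈ s, dist y x ≤ 1 / (n + 1) → dist (f y) (f x) ≤ ε * dist y x := by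
  have hsmall : ∀ᶠ y in 𝓝[s] x, ‖f y - f x‖ ≤ ε * ‖y - x‖ := by
    simpa using hf.isLittleO.def hε
  obtain ⟨r, hr, hball⟩ := Metric.mem_nhdsWithin_iff.mp hsmall
  obtain ⟨n, hn⟩ := exists_nat_one_div_lt hr
  refine ⟨n, fun y hy hyx => ?_⟩
  simpa [dist_eq_norm] using hball ⟨Metric.mem_ball.mpr (hyx.trans_lt hn), hy⟩

variable [MeasurableSpace X] [BorelSpace X]

theorem hausdorffMeasure_image_le_mul_volume_of_hasDerivWithinAt_zero
    (hf : ∀ x ∈ s, HasDerivWithinAt f 0 s x) {ε : ℝ≥0} (hε : 0 < ε) :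
    μH[1] (f '' s) ≤ ε * volume s := by
  set D : ℕ → Set ℝ := fun n =>
    {x ∈ s | ∀ y ∈ s, dist y x ≤ 1 / (n + 1) → dist (f y) (f x) ≤ ε * dist y x}
  have hD_mono : Monotone D := fun m n hmn x hx =>
    ⟨hx.1, fun y hy hyx => hx.2 y hy (hyx.trans (by gcongr))⟩
  have hD_cover : ⋃ n, D n = s := Subset.antisymm (iUnion_subset fun n => sep_subset _ _)
    fun x hx => mem_iUnion.mpr <|
      (hf x hx).exists_nat_forall_dist_le_mul_of_zero hε |>.imp fun _ hn => ⟨hx, hn⟩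
  calc μH[1] (f '' s) = ⨆ n, μH[1] (f '' D n) := by
        rw [← hD_cover, image_iUnion,
          Monotone.measure_iUnion fun m n hmn => image_mono (hD_mono hmn)]
    _ ≤ ε * volume s := iSup_le fun n =>
        (hausdorffMeasure_image_le_mul_volume_of_dist_le (by positivity)
          fun x hx y hy => hx.2 y hy.1).trans (by gcongr; exact sep_subset _ _)

theorem hausdorffMeasure_image_eq_zero_of_hasDerivWithinAt_zero
    (hf : ∀ x ∈ s, HasDerivWithinAt f 0 s x) : μH[1] (f '' s) = 0 := by
  have hpiece (n : ℤ) : μH[1] (f '' (s ∩ Ico n (n + 1))) = 0 := by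
    refine le_antisymm (ENNReal.le_of_forall_pos_le_add fun ε hε _ => ?_) zero_le
    calc μH[1] (f '' (s ∩ Ico n (n + 1))) ≤ ε * volume (s ∩ Ico (n : ℝ) (n + 1)) :=
          hausdorffMeasure_image_le_mul_volume_of_hasDerivWithinAt_zero
            (fun x hx => (hf x hx.1).mono inter_subset_left) hε
      _ ≤ ε * volume (Ico (n : ℝ) (n + 1)) := by gcongr; exact inter_subset_right
      _ = 0 + ε := by simp [Real.volume_Ico]
  rw [← inter_univ s, ← iUnion_Ico_intCast, inter_iUnion, image_iUnion]
  exact measure_iUnion_null hpiece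

end DerivZero

theorem stmt_3_general {X : Type*} [NormedAddCommGroup X] [NormedSpace ℝ X]
    [MeasurableSpace X] [BorelSpace X]
    (f : ℝ → X) :
    μH[1] (f '' {x ∈ Set.Icc (0:ℝ) 1 | HasDerivWithinAt f 0 (Set.Icc 0 1) x}) = 0 :=
  hausdorffMeasure_image_eq_zero_of_hasDerivWithinAt_zero fun _ hx => hx.2.mono (sep_subset _ _)

theorem stmt_3 {X : Type*} [NormedAddCommGroup X] [NormedSpace ℝ X] [CompleteSpace X]
    [MeasurableSpace X] [BorelSpace X]
    (f : ℝ → X) :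
    μH[1] (f '' {x ∈ Set.Icc (0:ℝ) 1 | HasDerivWithinAt f 0 (Set.Icc 0 1) x}) = 0 :=
  stmt_3_general f
end

section
/- Let f : [a,b] → X be continuous, G ⊂ (a,b) open with complement H := [a,b] \ G, and let (a_t,b_t), t ∈ T, be the components of G. If H¹(f(H)) = 0, then V(f,[a,b]) = ∑_{t∈T} V(f,[a_t,b_t]). -/
/-!
The inequality `≥` is superadditivity of the variation over non-overlapping subintervals.
For `≤`, take a partition `u` of `[a,b]`. Since `f [u i, u (i+1)]` is connected, the increment
`‖f (u (i+1)) - f (u i)‖` is at most `H¹(f [u i, u (i+1)])`. Up to the null set `f(H)`, this image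
is covered by the images of the pieces `[u i, u (i+1)] ∩ [a_t, b_t]`, and the `H¹`-measure of the
image of a set is at most the variation of `f` on it (`f` is a 1-Lipschitz function of its arc
length). Summing over `i` and using superadditivity on each `[a_t, b_t]` gives `∑ i ‖f (u (i+1)) - f (u i)‖ ≤ ∑ t V(f, [a_t, b_t])`.
-/

open MeasureTheory Set
open scoped NNReal

theorem sum_eVariationOn_Icc_le {α E ι : Type*} [LinearOrder α] [PseudoEMetricSpace E]
    (f : α → E) (s : Finset ι) {c d : ι → α} {A B : α} (hA : ∀ i ∈ s, A ≤ c i)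
    (hB : ∀ i ∈ s, d i ≤ B) (hs : (s : Set ι).Pairwise fun i j => d i ≤ c j ∨ d j ≤ c i) :
    ∑ i ∈ s, eVariationOn f (Icc (c i) (d i)) ≤ eVariationOn f (Icc A B) := by
  classical
  induction s using Finset.induction_on_max_value c generalizing B with
  | empty => simp
  | insert i s hi hmax ih =>
    have hA' : ∀ j ∈ s, A ≤ c j := fun j hj => hA j (Finset.mem_insert_of_mem hj)
    have hs' : (s : Set ι).Pairwise fun i j => d i ≤ c j ∨ d j ≤ c i :=
      hs.mono (by simp)
    rw [Finset.sum_insert hi]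
    rcases le_or_gt (d i) (c i) with hdeg | hcd
    · rw [eVariationOn.subsingleton f (subsingleton_Icc_of_ge hdeg), zero_add]
      exact ih hA' (fun j hj => hB j (Finset.mem_insert_of_mem hj)) hs'
    · have hleft : ∀ j ∈ s, d j ≤ c i := fun j hj =>
        (hs (by simp) (by simp [hj]) (ne_of_mem_of_not_mem hj hi).symm).resolve_left
          fun h => (h.trans (hmax j hj)).not_gt hcd
      have hdB : d i ≤ B := hB i (by simp)
      calc eVariationOn f (Icc (c i) (d i)) + ∑ j ∈ s, eVariationOn f (Icc (c j) (d j))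
          ≤ eVariationOn f (Icc (c i) B) + eVariationOn f (Icc A (c i)) :=
            add_le_add (eVariationOn.mono f (Icc_subset_Icc_right hdB)) (ih hA' hleft hs')
        _ = eVariationOn f (Icc A B) := by
            simpa [add_comm] using eVariationOn.Icc_add_Icc f (s := univ) (hA i (by simp))
              (hcd.le.trans hdB) (mem_univ _)

theorem tsum_eVariationOn_Icc_le {α E T : Type*} [LinearOrder α] [DenselyOrdered α]
    [PseudoEMetricSpace E] (f : α → E) {a b : α} {l r : T → α} (hlr : ∀ t, l t < r t)
    (ha : ∀ t, a ≤ l t) (hb : ∀ t, r t ≤ b)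
    (hdisj : Pairwise (Function.onFun Disjoint fun t => Ioo (l t) (r t))) :
    ∑' t, eVariationOn f (Icc (l t) (r t)) ≤ eVariationOn f (Icc a b) := by
  rw [ENNReal.tsum_eq_iSup_sum]
  refine iSup_le fun s => sum_eVariationOn_Icc_le f s (fun t _ => ha t) (fun t _ => hb t)
    fun t _ t' _ htt' => ?_
  have hmin_le_max := Ioo_disjoint_Ioo.1 (hdisj htt')
  grind [hlr t, hlr t']

theorem IsPreconnected.edist_le_hausdorffMeasure {X : Type*} [MetricSpace X] [MeasurableSpace X]
    [BorelSpace X] {S : Set X} (hS : IsPreconnected S) {x y : X} (hx : x ∈ S) (hy : y ∈ S) :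
    edist x y ≤ μH[1] S := by
  have hlip : LipschitzWith 1 (dist x) := LipschitzWith.dist_right x
  have hIcc : Icc 0 (dist x y) ⊆ dist x '' S :=
    (hS.image _ hlip.continuous.continuousOn).Icc_subset ⟨x, hx, dist_self x⟩ ⟨y, hy, rfl⟩
  calc edist x y = volume (Icc 0 (dist x y)) := by rw [Real.volume_Icc, sub_zero, edist_dist]
    _ ≤ μH[1] (dist x '' S) := by rw [← hausdorffMeasure_real]; exact measure_mono hIcc
    _ ≤ μH[1] S := by simpa using hlip.hausdorffMeasure_image_le zero_le_one S

theorem HasConstantSpeedOnWith.lipschitzOnWith {E : Type*} [PseudoEMetricSpace E] {f : ℝ → E}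
    {s : Set ℝ} {l : ℝ≥0} (h : HasConstantSpeedOnWith f s l) : LipschitzOnWith l f s := by
  have key : ∀ x ∈ s, ∀ y ∈ s, x ≤ y → edist (f x) (f y) ≤ l * edist x y := by
    intro x hx y hy hxy
    calc edist (f x) (f y) ≤ eVariationOn f (s ∩ Icc x y) :=
          eVariationOn.edist_le f ⟨hx, le_rfl, hxy⟩ ⟨hy, hxy, le_rfl⟩
      _ = l * edist x y := by
          rw [h hx hy, ENNReal.ofReal_mul l.coe_nonneg, ENNReal.ofReal_coe_nnreal, edist_comm,
            edist_dist, Real.dist_eq, abs_of_nonneg (sub_nonneg.2 hxy)]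
  intro x hx y hy
  rcases le_total x y with hxy | hyx
  · exact key x hx y hy hxy
  · rw [edist_comm, edist_comm x]
    exact key y hy x hx hyx

theorem hausdorffMeasure_image_le_eVariationOn {E : Type*} [EMetricSpace E] [MeasurableSpace E]
    [BorelSpace E] (f : ℝ → E) (s : Set ℝ) : μH[1] (f '' s) ≤ eVariationOn f s := by
  rcases s.eq_empty_or_nonempty with rfl | ⟨a, ha⟩
  · simp
  rcases eq_top_or_lt_top (eVariationOn f s) with htop | hfin
  · simp [htop]
  have hf : BoundedVariationOn f s := hfin.ne
  set φ := variationOnFromTo f s a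
  set g := naturalParameterization f s a
  have himage : f '' s = g '' (φ '' s) := by
    rw [image_image]
    exact image_congr fun b hb => (edist_eq_zero.1 <|
      edist_naturalParameterization_eq_zero hf.locallyBoundedVariationOn ha hb).symm
  have hlip : LipschitzOnWith 1 g (φ '' s) :=
    (has_unit_speed_naturalParameterization f hf.locallyBoundedVariationOn ha).lipschitzOnWith
  have hdiam : Metric.ediam (φ '' s) ≤ eVariationOn f s := by
    refine Metric.ediam_le ?_
    rintro _ ⟨x, hx, rfl⟩ _ ⟨y, hy, rfl⟩
    rw [edist_dist, Real.dist_eq, variationOnFromTo.sub_right hf.locallyBoundedVariationOn ha hx hy]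
    exact ENNReal.ofReal_le_of_le_toReal (variationOnFromTo.abs_le_eVariationOn hf)
  calc μH[1] (f '' s) ≤ μH[1] (φ '' s) := by
        simpa [himage] using hlip.hausdorffMeasure_image_le zero_le_one
    _ = volume (φ '' s) := by rw [hausdorffMeasure_real]
    _ ≤ Metric.ediam (φ '' s) := Real.volume_le_diam _
    _ ≤ eVariationOn f s := hdiam

section NullImage

variable {X T : Type*} [MetricSpace X] [MeasurableSpace X] [BorelSpace X] {f : ℝ → X}
  {l r : T → ℝ}

theorem edist_le_tsum_eVariationOn_of_hausdorffMeasure_image_diff_eq_zero [Countable T]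
    {x y : ℝ} (hxy : x ≤ y) (hf : ContinuousOn f (Icc x y))
    (hH : μH[1] (f '' (Icc x y \ ⋃ t, Ioo (l t) (r t))) = 0) :
    edist (f x) (f y) ≤ ∑' t, eVariationOn f (Icc (x ⊔ l t) (y ⊓ r t)) := by
  have hcover : Icc x y ⊆ (Icc x y \ ⋃ t, Ioo (l t) (r t)) ∪ ⋃ t, Icc (x ⊔ l t) (y ⊓ r t) := by
    intro z hz
    by_cases hzU : z ∈ ⋃ t, Ioo (l t) (r t)
    · obtain ⟨t, ht⟩ := mem_iUnion.1 hzU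
      exact Or.inr (mem_iUnion.2 ⟨t, by rw [← Icc_inter_Icc]; exact ⟨hz, Ioo_subset_Icc_self ht⟩⟩)
    · exact Or.inl ⟨hz, hzU⟩
  calc edist (f x) (f y) ≤ μH[1] (f '' Icc x y) :=
        (isPreconnected_Icc.image f hf).edist_le_hausdorffMeasure
          (mem_image_of_mem f (left_mem_Icc.2 hxy)) (mem_image_of_mem f (right_mem_Icc.2 hxy))
    _ ≤ μH[1] (f '' (Icc x y \ ⋃ t, Ioo (l t) (r t))) +
          ∑' t, μH[1] (f '' Icc (x ⊔ l t) (y ⊓ r t)) := by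
        refine (measure_mono (image_mono hcover)).trans ?_
        rw [image_union, image_iUnion]
        exact (measure_union_le _ _).trans (add_le_add le_rfl (measure_iUnion_le _))
    _ ≤ ∑' t, eVariationOn f (Icc (x ⊔ l t) (y ⊓ r t)) := by
        rw [hH, zero_add]
        exact ENNReal.tsum_le_tsum fun t => hausdorffMeasure_image_le_eVariationOn f _

theorem eVariationOn_Icc_le_tsum_of_hausdorffMeasure_image_diff_eq_zero [Countable T]
    {a b : ℝ} (hf : ContinuousOn f (Icc a b))
    (hH : μH[1] (f '' (Icc a b \ ⋃ t, Ioo (l t) (r t))) = 0) :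
    eVariationOn f (Icc a b) ≤ ∑' t, eVariationOn f (Icc (l t) (r t)) := by
  refine iSup_le fun ⟨n, u, hu, hus⟩ => ?_
  have hsub : ∀ i, Icc (u i) (u (i + 1)) ⊆ Icc a b := fun i => Icc_subset_Icc (hus i).1 (hus _).2
  calc ∑ i ∈ Finset.range n, edist (f (u (i + 1))) (f (u i))
      ≤ ∑ i ∈ Finset.range n, ∑' t, eVariationOn f (Icc (u i ⊔ l t) (u (i + 1) ⊓ r t)) :=
        Finset.sum_le_sum fun i _ => by
          rw [edist_comm]
          exact edist_le_tsum_eVariationOn_of_hausdorffMeasure_image_diff_eq_zero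
            (hu i.le_succ) (hf.mono (hsub i))
            (measure_mono_null (image_mono (sdiff_subset_sdiff_left (hsub i))) hH)
    _ = ∑' t, ∑ i ∈ Finset.range n, eVariationOn f (Icc (u i ⊔ l t) (u (i + 1) ⊓ r t)) :=
        (Summable.tsum_finsetSum fun _ _ => ENNReal.summable).symm
    _ ≤ ∑' t, eVariationOn f (Icc (l t) (r t)) := by
        refine ENNReal.tsum_le_tsum fun t => sum_eVariationOn_Icc_le f _
          (fun i _ => le_sup_right) (fun i _ => inf_le_right) fun i _ j _ hij => ?_
        rcases hij.lt_or_gt with h | h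
        · exact Or.inl (inf_le_left.trans ((hu h).trans le_sup_left))
        · exact Or.inr (inf_le_left.trans ((hu h).trans le_sup_left))

end NullImage

theorem stmt_5_general {X : Type*} [NormedAddCommGroup X]
    [MeasurableSpace X] [BorelSpace X]
    (a b : ℝ) (f : ℝ → X) (hf : ContinuousOn f (Set.Icc a b))
    (G : Set ℝ) (hG : G ⊆ Set.Ioo a b)
    (T : Type*) (l r : T → ℝ) (hlr : ∀ t, l t < r t)
    (hunion : G = ⋃ t, Set.Ioo (l t) (r t))
    (hdisj : Pairwise (Function.onFun Disjoint fun t => Set.Ioo (l t) (r t)))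
    (hH : μH[1] (f '' (Set.Icc a b \ G)) = 0) :
    eVariationOn f (Set.Icc a b) = ∑' t, eVariationOn f (Set.Icc (l t) (r t)) := by
  subst hunion
  have : Countable T :=
    hdisj.countable_of_isOpen_disjoint (fun _ => isOpen_Ioo) fun t => nonempty_Ioo.2 (hlr t)
  have hbounds : ∀ t, a ≤ l t ∧ r t ≤ b := fun t =>
    (Ioo_subset_Ioo_iff (hlr t)).1 ((subset_iUnion _ t).trans hG)
  exact le_antisymm (eVariationOn_Icc_le_tsum_of_hausdorffMeasure_image_diff_eq_zero hf hH)
    (tsum_eVariationOn_Icc_le f hlr (fun t => (hbounds t).1) (fun t => (hbounds t).2) hdisj)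

/-- Lemma H1L(i): if the image of the complement of `G` in `[a,b]` is `ℋ¹`-null,
then the variation of `f` on `[a,b]` is the sum of the variations over the closures
of the connected components `(l t, r t)` of the open set `G`. -/
theorem stmt_5 {X : Type*} [NormedAddCommGroup X] [NormedSpace ℝ X]
    [MeasurableSpace X] [BorelSpace X]
    (a b : ℝ) (hab : a < b) (f : ℝ → X) (hf : ContinuousOn f (Set.Icc a b))
    (G : Set ℝ) (hG : G ⊆ Set.Ioo a b)
    (T : Type*) (l r : T → ℝ) (hlr : ∀ t, l t < r t)
    (hunion : G = ⋃ t, Set.Ioo (l t) (r t))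
    (hdisj : Pairwise (Function.onFun Disjoint fun t => Set.Ioo (l t) (r t)))
    (hmax : ∀ t, l t ∉ G ∧ r t ∉ G)
    (hH : μH[1] (f '' (Set.Icc a b \ G)) = 0) :
    eVariationOn f (Set.Icc a b) = ∑' t, eVariationOn f (Set.Icc (l t) (r t)) :=
  stmt_5_general a b f hf G hG T l r hlr hunion hdisj hH
end

section
/- Let f : [a,b] → X be continuous, G ⊂ (a,b) open with complement H := [a,b] \ G, and let (a_t,b_t), t ∈ T, be the components of G. If V(f,[a,b]) = ∑_{t∈T} V(f,[a_t,b_t]) < ∞, then H¹(f(H)) = 0. -/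
/-!
Let `φ x = V(f, [a, x])`. Then `‖f x - f y‖ ≤ |φ x - φ y|`, so `f` factors through `φ` by a
1-Lipschitz map and `H¹(f(H)) ≤ H¹(φ(H)) = λ(φ(H))`. The monotone map `φ` sends the components
`(a_t, b_t)` to pairwise disjoint intervals of lengths `V(f, [a_t, b_t])`, which by hypothesis
fill up `[φ a, φ b]` up to a null set; `φ(H)` lies in the remaining null set.
-/

open MeasureTheory Set

theorem hausdorffMeasure_image_le_of_edist_le {α X Y : Type*} [EMetricSpace X] [EMetricSpace Y]
    [MeasurableSpace X] [BorelSpace X] [MeasurableSpace Y] [BorelSpace Y]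
    {f : α → X} {φ : α → Y} {s : Set α} {d : ℝ} (hd : 0 ≤ d)
    (h : ∀ x ∈ s, ∀ y ∈ s, edist (f x) (f y) ≤ edist (φ x) (φ y)) :
    μH[d] (f '' s) ≤ μH[d] (φ '' s) := by
  obtain rfl | ⟨x₀, -⟩ := s.eq_empty_or_nonempty
  · simp
  have : Nonempty α := ⟨x₀⟩
  set g := f ∘ Function.invFunOn φ s
  have hfactor : ∀ x ∈ s, g (φ x) = f x := fun x hx => by
    have := h (Function.invFunOn φ s (φ x)) (Function.invFunOn_apply_mem hx) x hx
    rwa [Function.invFunOn_apply_eq (f := φ) hx, edist_self, nonpos_iff_eq_zero,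
      edist_eq_zero] at this
  have hg : LipschitzOnWith 1 g (φ '' s) := by
    rintro _ ⟨x, hx, rfl⟩ _ ⟨y, hy, rfl⟩
    rw [hfactor x hx, hfactor y hy, ENNReal.coe_one, one_mul]
    exact h x hx y hy
  have himage : f '' s = g '' (φ '' s) := by
    rw [image_image]
    exact (image_congr fun x hx => hfactor x hx).symm
  simpa [himage] using hg.hausdorffMeasure_image_le hd

section VariationOnFromTo

variable {α E : Type*} [LinearOrder α] [PseudoEMetricSpace E] {f : α → E} {s : Set α}
  {a x y : α}

theorem LocallyBoundedVariationOn.ofReal_variationOnFromTo_sub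
    (hf : LocallyBoundedVariationOn f s) (ha : a ∈ s) (hx : x ∈ s) (hy : y ∈ s) (hxy : x ≤ y) :
    ENNReal.ofReal (variationOnFromTo f s a y - variationOnFromTo f s a x) =
      eVariationOn f (s ∩ Icc x y) := by
  rw [variationOnFromTo.sub_right hf ha hy hx, variationOnFromTo.eq_of_le f s hxy,
    ENNReal.ofReal_toReal (hf x y hx hy)]

theorem LocallyBoundedVariationOn.edist_le_edist_variationOnFromTo
    (hf : LocallyBoundedVariationOn f s) (ha : a ∈ s) (hx : x ∈ s) (hy : y ∈ s) :
    edist (f x) (f y) ≤ edist (variationOnFromTo f s a x) (variationOnFromTo f s a y) := by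
  wlog hxy : x ≤ y generalizing x y
  · rw [edist_comm, edist_comm (variationOnFromTo f s a x)]
    exact this hy hx (le_of_not_ge hxy)
  calc edist (f x) (f y) ≤ eVariationOn f (s ∩ Icc x y) :=
        eVariationOn.edist_le f ⟨hx, le_rfl, hxy⟩ ⟨hy, hxy, le_rfl⟩
    _ = ENNReal.ofReal (variationOnFromTo f s a y - variationOnFromTo f s a x) :=
        (hf.ofReal_variationOnFromTo_sub ha hx hy hxy).symm
    _ ≤ edist (variationOnFromTo f s a x) (variationOnFromTo f s a y) := by
        rw [edist_comm, edist_dist, Real.dist_eq]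
        exact ENNReal.ofReal_le_ofReal (le_abs_self _)

end VariationOnFromTo

theorem MonotoneOn.volume_image_Icc_diff_iUnion_Ioo_eq_zero {φ : ℝ → ℝ} {a b : ℝ}
    (hφ : MonotoneOn φ (Icc a b)) {ι : Type*} [Countable ι] {l r : ι → ℝ}
    (hl : ∀ i, l i ∈ Icc a b) (hr : ∀ i, r i ∈ Icc a b)
    (hdisj : Pairwise (Function.onFun Disjoint fun i => Ioo (l i) (r i)))
    (hsum : ENNReal.ofReal (φ b - φ a) = ∑' i, ENNReal.ofReal (φ (r i) - φ (l i))) :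
    volume (φ '' (Icc a b \ ⋃ i, Ioo (l i) (r i))) = 0 := by
  set U := ⋃ i, Ioo (φ (l i)) (φ (r i))
  have hdisjU : Pairwise (Function.onFun Disjoint fun i => Ioo (φ (l i)) (φ (r i))) := by
    intro i j hij
    have hlr := hdisj hij
    simp only [Function.onFun, Ioo_disjoint_Ioo] at hlr ⊢
    rw [← hφ.map_min (hr i) (hr j), ← hφ.map_max (hl i) (hl j)]
    exact hφ (min_rec' _ (hr i) (hr j)) (max_rec' _ (hl i) (hl j)) hlr
  have hU : volume U = ENNReal.ofReal (φ b - φ a) := by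
    rw [measure_iUnion hdisjU fun _ => measurableSet_Ioo, hsum]
    simp only [Real.volume_Ioo]
  have hUsub : U ⊆ Icc (φ a) (φ b) := iUnion_subset fun i => by
    have ha : a ∈ Icc a b := ⟨le_rfl, (hl i).1.trans (hl i).2⟩
    have hb : b ∈ Icc a b := ⟨(hr i).1.trans (hr i).2, le_rfl⟩
    exact Ioo_subset_Icc_self.trans
      (Icc_subset_Icc (hφ ha (hl i) (hl i).1) (hφ (hr i) hb (hr i).2))
  have himage : φ '' (Icc a b \ ⋃ i, Ioo (l i) (r i)) ⊆ Icc (φ a) (φ b) \ U := by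
    rintro _ ⟨x, ⟨hx, hxG⟩, rfl⟩
    have ha : a ∈ Icc a b := ⟨le_rfl, hx.1.trans hx.2⟩
    have hb : b ∈ Icc a b := ⟨hx.1.trans hx.2, le_rfl⟩
    refine ⟨⟨hφ ha hx hx.1, hφ hx hb hx.2⟩, fun hxU => ?_⟩
    obtain ⟨i, hli, hri⟩ := mem_iUnion.1 hxU
    exact hxG (mem_iUnion.2 ⟨i, hφ.reflect_lt (hl i) hx hli, hφ.reflect_lt hx (hr i) hri⟩)
  refine measure_mono_null himage ?_
  rw [measure_sdiff hUsub (MeasurableSet.iUnion fun _ => measurableSet_Ioo).nullMeasurableSet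
    (hU ▸ ENNReal.ofReal_ne_top), Real.volume_Icc, hU, tsub_self]

theorem stmt_6_general {X : Type*} [NormedAddCommGroup X] [NormedSpace ℝ X]
    [MeasurableSpace X] [BorelSpace X]
    (a b : ℝ) (hab : a < b) (f : ℝ → X)
    (G : Set ℝ) (hG : G ⊆ Set.Ioo a b)
    (T : Type*) (l r : T → ℝ) (hlr : ∀ t, l t < r t)
    (hunion : G = ⋃ t, Set.Ioo (l t) (r t))
    (hdisj : Pairwise (Function.onFun Disjoint fun t => Set.Ioo (l t) (r t)))
    (heq : eVariationOn f (Set.Icc a b) = ∑' t, eVariationOn f (Set.Icc (l t) (r t)))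
    (hfin : eVariationOn f (Set.Icc a b) ≠ ⊤) :
    μH[1] (f '' (Set.Icc a b \ G)) = 0 := by
  have hsub : ∀ t, Icc (l t) (r t) ⊆ Icc a b := fun t => by
    have := closure_mono ((subset_iUnion (fun t => Ioo (l t) (r t)) t).trans (hunion ▸ hG))
    rwa [closure_Ioo (hlr t).ne, closure_Ioo hab.ne] at this
  set s := Icc a b
  have hbv : LocallyBoundedVariationOn f s := fun _ _ _ _ =>
    ne_top_of_le_ne_top hfin (eVariationOn.mono f inter_subset_left)
  have ha : a ∈ s := left_mem_Icc.2 hab.le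
  have : Countable T :=
    hdisj.countable_of_isOpen_disjoint (fun _ => isOpen_Ioo) fun t => nonempty_Ioo.2 (hlr t)
  set φ := variationOnFromTo f s a
  have hvar : ∀ {x y}, x ∈ s → y ∈ s → x ≤ y →
      ENNReal.ofReal (φ y - φ x) = eVariationOn f (Icc x y) := fun hx hy hxy => by
    rw [hbv.ofReal_variationOnFromTo_sub ha hx hy hxy, inter_eq_right.2 (Icc_subset_Icc hx.1 hy.2)]
  have hnull : volume (φ '' (s \ G)) = 0 := by
    have hl t : l t ∈ s := hsub t ⟨le_rfl, (hlr t).le⟩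
    have hr t : r t ∈ s := hsub t ⟨(hlr t).le, le_rfl⟩
    rw [hunion]
    refine (variationOnFromTo.monotoneOn hbv ha).volume_image_Icc_diff_iUnion_Ioo_eq_zero
      hl hr hdisj ?_
    rw [hvar ha (right_mem_Icc.2 hab.le) hab.le, heq]
    exact tsum_congr fun t => (hvar (hl t) (hr t) (hlr t).le).symm
  refine nonpos_iff_eq_zero.1 ?_
  calc μH[1] (f '' (s \ G)) ≤ μH[1] (φ '' (s \ G)) :=
        hausdorffMeasure_image_le_of_edist_le zero_le_one fun x hx y hy =>
          hbv.edist_le_edist_variationOnFromTo ha hx.1 hy.1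
    _ = 0 := by rwa [hausdorffMeasure_real]

/-- Lemma H1L(ii): if the variation on `[a,b]` equals the (finite) sum of variations
over closures of the components of `G`, then the image of `H = [a,b] \ G` is `ℋ¹`-null. -/
theorem stmt_6 {X : Type*} [NormedAddCommGroup X] [NormedSpace ℝ X]
    [MeasurableSpace X] [BorelSpace X]
    (a b : ℝ) (hab : a < b) (f : ℝ → X) (hf : ContinuousOn f (Set.Icc a b))
    (G : Set ℝ) (hG : G ⊆ Set.Ioo a b)
    (T : Type*) (l r : T → ℝ) (hlr : ∀ t, l t < r t)
    (hunion : G = ⋃ t, Set.Ioo (l t) (r t))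
    (hdisj : Pairwise (Function.onFun Disjoint fun t => Set.Ioo (l t) (r t)))
    (hmax : ∀ t, l t ∉ G ∧ r t ∉ G)
    (heq : eVariationOn f (Set.Icc a b) = ∑' t, eVariationOn f (Set.Icc (l t) (r t)))
    (hfin : eVariationOn f (Set.Icc a b) ≠ ⊤) :
    μH[1] (f '' (Set.Icc a b \ G)) = 0 :=
  stmt_6_general a b hab f G hG T l r hlr hunion hdisj heq hfin
end

section
/- Let f : [a,b] → X be continuous, G ⊂ (a,b) open with complement H := [a,b] \ G, and let ([a_t,b_t]), t ∈ T, be the closures of the components of G. If H¹(f(H)) = 0 and f is L-Lipschitz on each [a_t,b_t], then f is L-Lipschitz on [a,b]. -/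
open MeasureTheory

theorem aux_edist_le_hausdorff {X : Type*} [MetricSpace X] [MeasurableSpace X] [BorelSpace X]
    {s : Set X} (hs : IsPreconnected s) {x y : X} (hx : x ∈ s) (hy : y ∈ s) :
    edist x y ≤ μH[1] s := by
  set g : X → ℝ := dist x with hg
  have hgl : LipschitzWith 1 g := LipschitzWith.dist_right x
  have himg : IsPreconnected (g '' s) := hs.image g hgl.continuous.continuousOn
  have h0 : (0 : ℝ) ∈ g '' s := ⟨x, hx, by simp [hg]⟩
  have hd : dist x y ∈ g '' s := ⟨y, hy, rfl⟩
  have hsub : Set.Icc (0 : ℝ) (dist x y) ⊆ g '' s := himg.Icc_subset h0 hd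
  calc edist x y = volume (Set.Icc (0 : ℝ) (dist x y)) := by
        rw [Real.volume_Icc, edist_dist]; simp
    _ ≤ volume (g '' s) := measure_mono hsub
    _ = μH[1] (g '' s) := by rw [MeasureTheory.hausdorffMeasure_real]
    _ ≤ 1 * μH[1] s := by
        simpa using hgl.hausdorffMeasure_image_le (d := 1) (by norm_num) s
    _ = μH[1] s := one_mul _

/-- Lemma H1L(iii): if `ℋ¹(f(H)) = 0` and `f` is `L`-Lipschitz on the closure of each
component of `G`, then `f` is `L`-Lipschitz on `[a,b]`. -/
theorem stmt_7 {X : Type*} [NormedAddCommGroup X] [NormedSpace ℝ X]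
    [MeasurableSpace X] [BorelSpace X]
    (a b : ℝ) (hab : a < b) (f : ℝ → X) (hf : ContinuousOn f (Set.Icc a b))
    (G : Set ℝ) (hG : G ⊆ Set.Ioo a b)
    (T : Type*) (l r : T → ℝ) (hlr : ∀ t, l t < r t)
    (hunion : G = ⋃ t, Set.Ioo (l t) (r t))
    (hdisj : Pairwise (Function.onFun Disjoint fun t => Set.Ioo (l t) (r t)))
    (hmax : ∀ t, l t ∉ G ∧ r t ∉ G)
    (hH : μH[1] (f '' (Set.Icc a b \ G)) = 0)
    (L : NNReal) (hlip : ∀ t, LipschitzOnWith L f (Set.Icc (l t) (r t))) :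
    LipschitzOnWith L f (Set.Icc a b) := by
  have hT : Countable T :=
    hdisj.countable_of_isOpen_disjoint (fun t => isOpen_Ioo)
      (fun t => Set.nonempty_Ioo.2 (hlr t))
  suffices key : ∀ x ∈ Set.Icc a b, ∀ y ∈ Set.Icc a b, x ≤ y →
      edist (f x) (f y) ≤ L * edist x y by
    intro x hx y hy
    rcases le_total x y with h | h
    · exact key x hx y hy h
    · rw [edist_comm, edist_comm x y]; exact key y hy x hx h
  intro x hx y hy hxy
  have hIcc_sub : Set.Icc x y ⊆ Set.Icc a b := Set.Icc_subset_Icc hx.1 hy.2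
  have hconn : IsPreconnected (f '' Set.Icc x y) :=
    isPreconnected_Icc.image f (hf.mono hIcc_sub)
  have h1 : edist (f x) (f y) ≤ μH[1] (f '' Set.Icc x y) :=
    aux_edist_le_hausdorff hconn (Set.mem_image_of_mem f (Set.left_mem_Icc.2 hxy))
      (Set.mem_image_of_mem f (Set.right_mem_Icc.2 hxy))
  -- covering
  have hcover : f '' Set.Icc x y ⊆
      f '' (Set.Icc a b \ G) ∪ ⋃ t, f '' (Set.Icc (l t) (r t) ∩ Set.Icc x y) := by
    rintro _ ⟨w, hw, rfl⟩
    by_cases hwG : w ∈ G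
    · right
      rw [hunion] at hwG
      obtain ⟨t, ht⟩ := Set.mem_iUnion.1 hwG
      exact Set.mem_iUnion.2 ⟨t, Set.mem_image_of_mem f ⟨Set.Ioo_subset_Icc_self ht, hw⟩⟩
    · exact Or.inl (Set.mem_image_of_mem f ⟨hIcc_sub hw, hwG⟩)
  set v : T → ENNReal := fun t => volume (Set.Ioo (l t) (r t) ∩ Set.Icc x y) with hv
  have hterm : ∀ t, μH[1] (f '' (Set.Icc (l t) (r t) ∩ Set.Icc x y)) ≤ (L : ENNReal) * v t := by
    intro t
    have hls : LipschitzOnWith L f (Set.Icc (l t) (r t) ∩ Set.Icc x y) :=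
      (hlip t).mono Set.inter_subset_left
    have h2 := hls.hausdorffMeasure_image_le (d := 1) (by norm_num)
    rw [ENNReal.rpow_one] at h2
    refine h2.trans ?_
    have hvol : μH[1] (Set.Icc (l t) (r t) ∩ Set.Icc x y) ≤ v t := by
      rw [MeasureTheory.hausdorffMeasure_real]
      have hss : Set.Icc (l t) (r t) ∩ Set.Icc x y ⊆
          (Set.Ioo (l t) (r t) ∩ Set.Icc x y) ∪ {l t, r t} := by
        rintro z ⟨hz1, hz2⟩
        rcases eq_or_lt_of_le hz1.1 with h | h
        · exact Or.inr (Or.inl h.symm)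
        rcases eq_or_lt_of_le hz1.2 with h' | h'
        · exact Or.inr (Or.inr h')
        · exact Or.inl ⟨⟨h, h'⟩, hz2⟩
      calc volume (Set.Icc (l t) (r t) ∩ Set.Icc x y)
          ≤ volume (Set.Ioo (l t) (r t) ∩ Set.Icc x y) + volume ({l t, r t} : Set ℝ) :=
            (measure_mono hss).trans (measure_union_le _ _)
        _ = v t := by
            have : volume ({l t, r t} : Set ℝ) = 0 :=
              (Set.Finite.insert _ (Set.finite_singleton _)).measure_zero volume
            rw [hv, this, add_zero]
    exact mul_le_mul_right hvol _
  have hsum : ∑' t, v t = volume (G ∩ Set.Icc x y) := by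
    have hmeas : ∀ t, MeasurableSet (Set.Ioo (l t) (r t) ∩ Set.Icc x y) :=
      fun t => measurableSet_Ioo.inter measurableSet_Icc
    have hd : Pairwise (Function.onFun Disjoint
        fun t => Set.Ioo (l t) (r t) ∩ Set.Icc x y) :=
      hdisj.mono fun i j h => h.mono Set.inter_subset_left Set.inter_subset_left
    rw [← measure_iUnion hd hmeas, hunion, Set.iUnion_inter]
  calc edist (f x) (f y) ≤ μH[1] (f '' Set.Icc x y) := h1
    _ ≤ μH[1] (f '' (Set.Icc a b \ G)) +
        μH[1] (⋃ t, f '' (Set.Icc (l t) (r t) ∩ Set.Icc x y)) :=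
          (measure_mono hcover).trans (measure_union_le _ _)
    _ = μH[1] (⋃ t, f '' (Set.Icc (l t) (r t) ∩ Set.Icc x y)) := by rw [hH, zero_add]
    _ ≤ ∑' t, μH[1] (f '' (Set.Icc (l t) (r t) ∩ Set.Icc x y)) := measure_iUnion_le _
    _ ≤ ∑' t, (L : ENNReal) * v t := ENNReal.tsum_le_tsum hterm
    _ = (L : ENNReal) * volume (G ∩ Set.Icc x y) := by rw [ENNReal.tsum_mul_left, hsum]
    _ ≤ (L : ENNReal) * edist x y := by
        refine mul_le_mul_right ?_ _
        calc volume (G ∩ Set.Icc x y) ≤ volume (Set.Icc x y) :=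
              measure_mono Set.inter_subset_right
          _ = edist x y := by
              rw [Real.volume_Icc, edist_dist, Real.dist_eq, abs_sub_comm,
                abs_of_nonneg (sub_nonneg.2 hxy)]
end

section
/- Let f : [a,b] → X be continuous, of bounded variation, and not constant on any subinterval of [a,b]. Let v_f(x) := V(f,[a,x]) and ℓ := v_f(b). If F := f ∘ v_f^{-1} : [0,ℓ] → X is C¹, then ‖F'(x)‖ = 1 for every x ∈ [0,ℓ]. -/
/-!
`F` is the arc-length parametrisation of `f`: the variation function `v_f` is continuous and
monotone, so it maps `[a, b]` onto `[0, ℓ]`, and `F` has unit speed there, `V(F, [p, q]) = q - p`.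
Given `ε > 0`, take a short interval `[p, q]` on which `F'` stays `ε`-close to `F' y`. The mean
value inequality applied to `z ↦ F z - z • F' y` gives
`(q - p) ‖F' y‖ ≤ ‖F q - F p‖ + ε (q - p) ≤ (1 + ε) (q - p)`,
and applied to `F` itself it gives `q - p = V(F, [p, q]) ≤ (‖F' y‖ + ε) (q - p)`.
-/

open Set Topology
open scoped NNReal ENNReal

theorem BoundedVariationOn.continuousOn_variationOnFromTo {α E : Type*} [LinearOrder α]
    [TopologicalSpace α] [OrderTopology α] [PseudoEMetricSpace E] {f : α → E} {s : Set α}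
    (hf : BoundedVariationOn f s) (hcont : ContinuousOn f s) {a : α} (ha : a ∈ s) :
    ContinuousOn (variationOnFromTo f s a) s := by
  intro x hx
  have hsplit : ∀ y ∈ s, variationOnFromTo f s a y = variationOnFromTo f s a x +
      ((eVariationOn f (s ∩ Icc x y)).toReal - (eVariationOn f (s ∩ Icc y x)).toReal) := by
    intro y hy
    rw [← variationOnFromTo.add hf.locallyBoundedVariationOn ha hx hy]
    congr 1
    rcases le_total x y with hxy | hyx
    · rw [variationOnFromTo.eq_of_le f s hxy, eVariationOn.subsingleton f
        (subsingleton_Icc_of_ge hxy |>.anti inter_subset_right), ENNReal.toReal_zero, sub_zero]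
    · rw [variationOnFromTo.eq_of_ge f s hyx, eVariationOn.subsingleton f
        (subsingleton_Icc_of_ge hyx |>.anti inter_subset_right), ENNReal.toReal_zero, zero_sub]
  have hright := hf.tendsto_eVariationOn_Icc_zero_right x ((hcont x hx).mono inter_subset_left)
  have hleft := hf.tendsto_eVariationOn_Icc_zero_left ((hcont x hx).mono inter_subset_left)
  have hlim := tendsto_const_nhds (x := variationOnFromTo f s a x) |>.add
    (((ENNReal.tendsto_toReal ENNReal.zero_ne_top).comp hright).sub
      ((ENNReal.tendsto_toReal ENNReal.zero_ne_top).comp hleft))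
  simp only [ENNReal.toReal_zero, sub_zero, add_zero] at hlim
  exact hlim.congr' (eventually_nhdsWithin_of_forall fun y hy => (hsplit y hy).symm)

theorem HasConstantSpeedOnWith.mono_of_ordConnected {E : Type*} [PseudoEMetricSpace E]
    {f : ℝ → E} {s t : Set ℝ} {l : ℝ≥0} (h : HasConstantSpeedOnWith f s l) (hts : t ⊆ s)
    [ht : t.OrdConnected] : HasConstantSpeedOnWith f t l := by
  intro x hx y hy
  have : t ∩ Icc x y = s ∩ Icc x y :=
    Subset.antisymm (inter_subset_inter_left _ hts)
      fun z hz => ⟨ht.out hx hy hz.2, hz.2⟩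
  rw [this]
  exact h (hts hx) (hts hy)

theorem HasConstantSpeedOnWith.congr {E : Type*} [PseudoEMetricSpace E]
    {f g : ℝ → E} {s : Set ℝ} {l : ℝ≥0} (h : HasConstantSpeedOnWith f s l) (hfg : EqOn f g s) :
    HasConstantSpeedOnWith g s l := by
  intro x hx y hy
  rw [← eVariationOn.eq_of_eqOn (hfg.mono inter_subset_left)]
  exact h hx hy

theorem hasUnitSpeedOn_of_comp_variationOnFromTo {α E : Type*} [LinearOrder α] [EMetricSpace E]
    {f : α → E} {s : Set α} (hf : LocallyBoundedVariationOn f s) {a : α} (ha : a ∈ s)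
    {F : ℝ → E} (hF : ∀ x ∈ s, F (variationOnFromTo f s a x) = f x) :
    HasUnitSpeedOn F (variationOnFromTo f s a '' s) := by
  refine HasConstantSpeedOnWith.congr (has_unit_speed_naturalParameterization f hf ha) ?_
  rintro _ ⟨x, hx, rfl⟩
  rw [hF x hx]
  exact edist_eq_zero.mp (edist_naturalParameterization_eq_zero hf ha hx)

theorem LipschitzOnWith.eVariationOn_Icc_le {E : Type*} [PseudoEMetricSpace E] {f : ℝ → E}
    {K : ℝ≥0} {p q : ℝ} (h : LipschitzOnWith K f (Icc p q)) (hpq : p ≤ q) :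
    eVariationOn f (Icc p q) ≤ K * ENNReal.ofReal (q - p) := by
  have := h.comp_eVariationOn_le (g := id) (mapsTo_id _)
  rwa [Function.comp_id, ← inter_self (Icc p q), monotoneOn_id.eVariationOn_eq
    (left_mem_Icc.mpr hpq) (right_mem_Icc.mpr hpq), inter_self] at this

theorem exists_Icc_subset_of_mem_nhdsWithin_Icc {c d y : ℝ} (hcd : c < d) (hy : y ∈ Icc c d)
    {U : Set ℝ} (hU : U ∈ 𝓝[Icc c d] y) : ∃ p q, p < q ∧ Icc p q ⊆ Icc c d ∩ U := by
  obtain ⟨δ, hδ, hball⟩ := Metric.mem_nhdsWithin_iff.mp hU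
  refine ⟨max c (y - δ / 2), min d (y + δ / 2), ?_, fun z hz => ?_⟩
  · have := hy.1; have := hy.2
    exact max_lt (lt_min hcd (by linarith)) (lt_min (by linarith) (by linarith))
  · have hz' : z ∈ Icc c d := ⟨(le_max_left _ _).trans hz.1, hz.2.trans (min_le_left _ _)⟩
    refine ⟨hz', hball ⟨?_, hz'⟩⟩
    have := (le_max_right c (y - δ / 2)).trans hz.1
    have := hz.2.trans (min_le_right d (y + δ / 2))
    rw [Metric.mem_ball, Real.dist_eq, abs_lt]
    constructor <;> linarith

theorem HasConstantSpeedOnWith.dist_le {E : Type*} [PseudoMetricSpace E] {f : ℝ → E}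
    {l : ℝ≥0} {p q : ℝ} (h : HasConstantSpeedOnWith f (Icc p q) l) (hpq : p ≤ q) :
    dist (f q) (f p) ≤ l * (q - p) := by
  have hvar := h (left_mem_Icc.mpr hpq) (right_mem_Icc.mpr hpq)
  rw [inter_self] at hvar
  have := eVariationOn.edist_le f (right_mem_Icc.mpr hpq) (left_mem_Icc.mpr hpq)
  rw [hvar, edist_dist] at this
  have hpq' : 0 ≤ q - p := sub_nonneg.mpr hpq
  exact (ENNReal.ofReal_le_ofReal_iff (by positivity)).mp this

section Derivative

variable {X : Type*} [NormedAddCommGroup X] [NormedSpace ℝ X] {F F' : ℝ → X} {l : ℝ≥0}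
  {p q : ℝ}

theorem HasConstantSpeedOnWith.speed_le_of_norm_deriv_le
    (h : HasConstantSpeedOnWith F (Icc p q) l) (hpq : p < q)
    (hF' : ∀ z ∈ Icc p q, HasDerivWithinAt F (F' z) (Icc p q) z) {K : ℝ}
    (hK : ∀ z ∈ Icc p q, ‖F' z‖ ≤ K) : (l : ℝ) ≤ K := by
  have hK0 : 0 ≤ K := (norm_nonneg _).trans (hK p (left_mem_Icc.mpr hpq.le))
  have hlip : LipschitzOnWith K.toNNReal F (Icc p q) :=
    (convex_Icc p q).lipschitzOnWith_of_nnnorm_hasDerivWithin_le hF' fun z hz => by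
      rw [← NNReal.coe_le_coe, coe_nnnorm, Real.coe_toNNReal K hK0]; exact hK z hz
  have hvar := h (left_mem_Icc.mpr hpq.le) (right_mem_Icc.mpr hpq.le)
  rw [inter_self] at hvar
  have hbound : ENNReal.ofReal (l * (q - p)) ≤ K.toNNReal * ENNReal.ofReal (q - p) :=
    hvar ▸ hlip.eVariationOn_Icc_le hpq.le
  rw [ENNReal.ofReal_coe_nnreal.symm, ← ENNReal.ofReal_mul (by positivity),
    ENNReal.ofReal_le_ofReal_iff (by positivity), Real.coe_toNNReal K hK0] at hbound
  exact le_of_mul_le_mul_right hbound (sub_pos.mpr hpq)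

theorem HasConstantSpeedOnWith.norm_le_add_of_norm_deriv_sub_le
    (h : HasConstantSpeedOnWith F (Icc p q) l) (hpq : p < q)
    (hF' : ∀ z ∈ Icc p q, HasDerivWithinAt F (F' z) (Icc p q) z) {v : X} {ε : ℝ}
    (hε : ∀ z ∈ Icc p q, ‖F' z - v‖ ≤ ε) : ‖v‖ ≤ l + ε := by
  have hG : ‖(F q - q • v) - (F p - p • v)‖ ≤ ε * ‖q - p‖ :=
    (convex_Icc p q).norm_image_sub_le_of_norm_hasDerivWithin_le
      (fun z hz => by simpa using (hF' z hz).sub ((hasDerivWithinAt_id z _).smul_const v)) hε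
      (left_mem_Icc.mpr hpq.le) (right_mem_Icc.mpr hpq.le)
  have hF := h.dist_le hpq.le
  rw [dist_eq_norm] at hF
  rw [Real.norm_of_nonneg (sub_nonneg.mpr hpq.le)] at hG
  have hmain : (q - p) * ‖v‖ ≤ (q - p) * (l + ε) := calc
    (q - p) * ‖v‖ = ‖(F q - F p) - ((F q - q • v) - (F p - p • v))‖ := by
      rw [← Real.norm_of_nonneg (sub_nonneg.mpr hpq.le), ← norm_smul, sub_smul]; congr 1; abel
    _ ≤ ‖F q - F p‖ + ‖(F q - q • v) - (F p - p • v)‖ := norm_sub_le _ _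
    _ ≤ (q - p) * (l + ε) := by linarith
  exact le_of_mul_le_mul_left hmain (sub_pos.mpr hpq)

theorem HasConstantSpeedOnWith.norm_eq_of_hasDerivWithinAt {c d : ℝ}
    (h : HasConstantSpeedOnWith F (Icc c d) l) (hcd : c < d)
    (hF' : ∀ z ∈ Icc c d, HasDerivWithinAt F (F' z) (Icc c d) z)
    (hcont : ContinuousOn F' (Icc c d)) {y : ℝ} (hy : y ∈ Icc c d) : ‖F' y‖ = l := by
  have key : ∀ ε > 0, ‖F' y‖ ≤ l + ε ∧ (l : ℝ) ≤ ‖F' y‖ + ε := by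
    intro ε hε
    obtain ⟨p, q, hpq, hsub⟩ := exists_Icc_subset_of_mem_nhdsWithin_Icc hcd hy
      (hcont y hy (Metric.closedBall_mem_nhds (F' y) hε))
    have hpq_sub : Icc p q ⊆ Icc c d := hsub.trans inter_subset_left
    have hclose : ∀ z ∈ Icc p q, ‖F' z - F' y‖ ≤ ε := fun z hz => by
      simpa [dist_eq_norm] using (hsub hz).2
    have hspeed := h.mono_of_ordConnected hpq_sub
    have hF'pq : ∀ z ∈ Icc p q, HasDerivWithinAt F (F' z) (Icc p q) z :=
      fun z hz => (hF' z (hpq_sub hz)).mono hpq_sub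
    refine ⟨hspeed.norm_le_add_of_norm_deriv_sub_le hpq hF'pq hclose,
      hspeed.speed_le_of_norm_deriv_le hpq hF'pq fun z hz => ?_⟩
    linarith [norm_le_insert' (F' z) (F' y), hclose z hz]
  exact le_antisymm (le_of_forall_pos_le_add fun ε hε => (key ε hε).1)
    (le_of_forall_pos_le_add fun ε hε => (key ε hε).2)

end Derivative

/-- If `f : [a,b] → X` is continuous, BV and nonconstant on every subinterval,
and `F = f ∘ v_f⁻¹` (encoded by `F (v_f x) = f x`) is `C¹` on `[0, ℓ]`,
then `‖F'‖ = 1` on `[0, ℓ]`. -/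
theorem stmt_8 {X : Type*} [NormedAddCommGroup X] [NormedSpace ℝ X]
    (a b : ℝ) (hab : a < b) (f : ℝ → X)
    (hf : ContinuousOn f (Set.Icc a b))
    (hBV : eVariationOn f (Set.Icc a b) ≠ ⊤)
    (hnc : ∀ c d, a ≤ c → c < d → d ≤ b → ¬ (∀ x ∈ Set.Icc c d, f x = f c))
    (vf : ℝ → ℝ) (hvf : ∀ x ∈ Set.Icc a b, vf x = (eVariationOn f (Set.Icc a x)).toReal)
    (ℓ : ℝ) (hl : ℓ = vf b)
    (F F' : ℝ → X)
    (hF : ∀ x ∈ Set.Icc a b, F (vf x) = f x)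
    (hF' : ∀ y ∈ Set.Icc 0 ℓ, HasDerivWithinAt F (F' y) (Set.Icc 0 ℓ) y)
    (hF'cont : ContinuousOn F' (Set.Icc 0 ℓ)) :
    ∀ y ∈ Set.Icc 0 ℓ, ‖F' y‖ = 1 := by
  have hfBV : BoundedVariationOn f (Icc a b) := hBV
  have ha : a ∈ Icc a b := left_mem_Icc.mpr hab.le
  have hvf' : EqOn vf (variationOnFromTo f (Icc a b) a) (Icc a b) := fun x hx => by
    rw [hvf x hx, variationOnFromTo.eq_of_le f _ hx.1, Icc_inter_Icc, max_self, min_eq_right hx.2]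
  have himage : variationOnFromTo f (Icc a b) a '' Icc a b = Icc 0 ℓ := by
    rw [(hfBV.continuousOn_variationOnFromTo hf ha).image_Icc_of_monotoneOn hab.le
      (variationOnFromTo.monotoneOn hfBV.locallyBoundedVariationOn ha), variationOnFromTo.self,
      hl, hvf' (right_mem_Icc.mpr hab.le)]
  have hspeed : HasUnitSpeedOn F (Icc 0 ℓ) := himage ▸
    hasUnitSpeedOn_of_comp_variationOnFromTo hfBV.locallyBoundedVariationOn ha
      fun x hx => hvf' hx ▸ hF x hx
  have hℓ : 0 < ℓ := by
    rw [hl, hvf b (right_mem_Icc.mpr hab.le)]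
    refine ENNReal.toReal_pos (fun h0 => hnc a b le_rfl hab le_rfl fun x hx => ?_) hBV
    exact edist_eq_zero.mp ((eVariationOn.eq_zero_iff f).mp h0 x hx a ha)
  intro y hy
  simpa using hspeed.norm_eq_of_hasDerivWithinAt hℓ hF' hF'cont hy
end

section
/- Let (I_α)_{α∈A} be a countable family of pairwise non-overlapping compact subintervals of [0,d] with nonempty interiors, and let (μ_α)_{α∈A} be positive reals with ∑_{α∈A} μ_α < ∞. Then there exist d' > 0 and an increasing homeomorphism Ψ : [0,d'] → [0,d] such that λ(Ψ^{-1}(I_α)) = μ_α for every α and Ψ^{-1} is absolutely continuous. -/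
/-!
Let `w` be the density equal to `μ_α / |I_α|` on the interior of `I_α` and to `1` elsewhere.
Summability of `μ` makes `w` locally integrable, so `Φ y = ∫₀ʸ w` is continuous; as `w > 0` and
`w = 1` outside `(0, d)`, `Φ` is an increasing bijection of `ℝ`. Then `Ψ = Φ⁻¹` maps `[0, Φ d]`
onto `[0, d]`, `Ψ⁻¹(I_α) = [Φ l_α, Φ r_α]` has length `∫_{I_α} w = μ_α`, and `Φ`, a primitive of an
integrable function, is absolutely continuous.
-/

open MeasureTheory

/-- Absolute continuity of a real function on `[a,b]` (ε–δ definition). -/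
def AbsolutelyContinuousOn (g : ℝ → ℝ) (a b : ℝ) : Prop :=
  ∀ ε > (0:ℝ), ∃ δ > (0:ℝ), ∀ (n : ℕ) (u v : Fin n → ℝ),
    (∀ k, a ≤ u k ∧ u k ≤ v k ∧ v k ≤ b) →
    (Pairwise (Function.onFun Disjoint fun k => Set.Ioo (u k) (v k))) →
    (∑ k, (v k - u k)) < δ → (∑ k, |g (v k) - g (u k)|) < ε

open Set Filter
open scoped ENNReal

theorem AbsolutelyContinuousOnInterval.absolutelyContinuousOn {g : ℝ → ℝ} {a b : ℝ}
    (hg : AbsolutelyContinuousOnInterval g a b) : AbsolutelyContinuousOn g a b := by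
  intro ε hε
  obtain ⟨δ, hδ, hgδ⟩ := (absolutelyContinuousOnInterval_iff g a b).1 hg ε hε
  refine ⟨δ, hδ, fun n u v huv hdisj hlen => ?_⟩
  let I : ℕ → ℝ × ℝ := fun i => if h : i < n then (u ⟨i, h⟩, v ⟨i, h⟩) else (0, 0)
  have hI : ∀ i (h : i < n), I i = (u ⟨i, h⟩, v ⟨i, h⟩) := fun i h => dif_pos h
  have hsum : ∀ f : ℝ → ℝ → ℝ, ∑ i ∈ Finset.range n, f (I i).1 (I i).2 = ∑ k, f (u k) (v k) :=
    fun f => by simp [← Fin.sum_univ_eq_sum_range (fun i => f (I i).1 (I i).2), hI]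
  have hmem : (n, I) ∈ AbsolutelyContinuousOnInterval.disjWithin a b := by
    refine ⟨fun i hi => ?_, fun i hi j hj hij => ?_⟩
    · have hi' := Finset.mem_range.1 hi
      obtain ⟨h₁, h₂, h₃⟩ := huv ⟨i, hi'⟩
      simp only [hI i hi']
      exact ⟨Icc_subset_uIcc ⟨h₁, h₂.trans h₃⟩, Icc_subset_uIcc ⟨h₁.trans h₂, h₃⟩⟩
    · have hi' := Finset.mem_range.1 hi
      have hj' := Finset.mem_range.1 hj
      have hd := hdisj (i := ⟨i, hi'⟩) (j := ⟨j, hj'⟩) (by simpa [Fin.ext_iff] using hij)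
      simp only [Function.onFun, hI i hi', hI j hj'] at hd ⊢
      rw [uIoc_of_le (huv _).2.1, uIoc_of_le (huv _).2.1]
      exact Ioc_disjoint_Ioc.2 (Ioo_disjoint_Ioo.1 hd)
  have key := hgδ (n, I) hmem (by
    rw [hsum dist]; simpa [Real.dist_eq, abs_of_nonpos, sub_nonpos.2 (huv _).2.1] using hlen)
  rw [hsum (fun x y => dist (g x) (g y))] at key
  simpa [Real.dist_eq, abs_sub_comm] using key

section Primitive

variable {w : ℝ → ℝ}

theorem intervalIntegral_eq_sub_of_eqOn_one {a b : ℝ} (h : EqOn w 1 (uIcc a b)) :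
    ∫ t in a..b, w t = b - a := by
  simp [intervalIntegral.integral_congr h]

theorem strictMono_primitive_of_pos (hw : ∀ a b, IntervalIntegrable w volume a b)
    (hpos : ∀ y, 0 < w y) (a : ℝ) : StrictMono fun y => ∫ t in a..y, w t := by
  intro x y hxy
  have := intervalIntegral.intervalIntegral_pos_of_pos_on (hw x y) (fun t _ => hpos t) hxy
  simp only
  linarith [intervalIntegral.integral_interval_sub_left (hw a y) (hw a x)]

theorem surjective_primitive_of_eqOn_one (hw : ∀ a b, IntervalIntegrable w volume a b)
    {a b : ℝ} (h : ∀ y ∉ Ioo a b, w y = 1) : Function.Surjective fun y => ∫ t in a..y, w t := by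
  refine (intervalIntegral.continuous_primitive hw a).surjective ?_ ?_
  · have hright : ∀ y, b ≤ y → ∫ t in a..y, w t = y + ((∫ t in a..b, w t) - b) := by
      intro y hy
      rw [← intervalIntegral.integral_add_adjacent_intervals (hw a b) (hw b y),
        intervalIntegral_eq_sub_of_eqOn_one (a := b) fun t ht => h t fun ht' => ?_]
      · ring
      rw [uIcc_of_le hy] at ht
      exact ht'.2.not_ge ht.1
    exact (tendsto_atTop_add_const_right _ _ tendsto_id).congr'
      ((eventually_ge_atTop b).mono fun y hy => (hright y hy).symm)
  · have hleft : ∀ y, y ≤ a → ∫ t in a..y, w t = y - a := fun y hy =>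
      intervalIntegral_eq_sub_of_eqOn_one fun t ht => h t fun ht' => by
        rw [uIcc_of_ge hy] at ht
        exact ht'.1.not_ge ht.2
    exact (tendsto_atBot_add_const_right _ _ tendsto_id).congr'
      ((eventually_le_atBot a).mono fun y hy => (hleft y hy).symm)

end Primitive

section StepDensity

variable {A : Type*} (l r : A → ℝ) (c : A → ℝ≥0∞)

noncomputable def stepDensity (y : ℝ) : ℝ≥0∞ :=
  ∑' α, (Ioo (l α) (r α)).indicator (fun _ => c α) y +
    (⋃ α, Ioo (l α) (r α))ᶜ.indicator 1 y

theorem measurable_stepDensity [Countable A] : Measurable (stepDensity l r c) :=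
  (Measurable.tsum fun _ => measurable_const.indicator measurableSet_Ioo).add
    (measurable_const.indicator (MeasurableSet.iUnion fun _ => measurableSet_Ioo).compl)

variable {l r c}

theorem stepDensity_eq_of_mem (hdisj : Pairwise (Function.onFun Disjoint fun α => Ioo (l α) (r α)))
    {α : A} {y : ℝ} (hy : y ∈ Ioo (l α) (r α)) : stepDensity l r c y = c α := by
  have hU : y ∉ (⋃ β, Ioo (l β) (r β))ᶜ := fun h => h (mem_iUnion.2 ⟨α, hy⟩)
  rw [stepDensity, indicator_of_notMem hU, add_zero, tsum_eq_single α, indicator_of_mem hy]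
  exact fun β hβ => indicator_of_notMem (fun hyβ => disjoint_left.1 (hdisj hβ) hyβ hy) _

theorem stepDensity_eq_one {y : ℝ} (hy : ∀ α, y ∉ Ioo (l α) (r α)) : stepDensity l r c y = 1 := by
  have hU : y ∈ (⋃ α, Ioo (l α) (r α))ᶜ := by simpa using hy
  rw [stepDensity, indicator_of_mem hU,
    ENNReal.tsum_eq_zero.2 fun α => indicator_of_notMem (hy α) _, zero_add, Pi.one_apply]

theorem stepDensity_mem_insert_range
    (hdisj : Pairwise (Function.onFun Disjoint fun α => Ioo (l α) (r α))) (y : ℝ) :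
    stepDensity l r c y ∈ insert 1 (range c) := by
  by_cases hy : ∃ α, y ∈ Ioo (l α) (r α)
  · obtain ⟨α, hα⟩ := hy
    exact mem_insert_of_mem _ ⟨α, (stepDensity_eq_of_mem hdisj hα).symm⟩
  · exact mem_insert_iff.2 (Or.inl (stepDensity_eq_one (not_exists.1 hy)))

theorem setLIntegral_stepDensity_le [Countable A] (s : Set ℝ) :
    ∫⁻ y in s, stepDensity l r c y ≤ (∑' α, c α * volume (Ioo (l α) (r α))) + volume s := by
  unfold stepDensity
  rw [lintegral_add_left (Measurable.tsum fun _ =>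
    measurable_const.indicator measurableSet_Ioo), lintegral_tsum fun _ =>
    (measurable_const.indicator measurableSet_Ioo).aemeasurable]
  gcongr with α
  · calc ∫⁻ y in s, (Ioo (l α) (r α)).indicator (fun _ => c α) y
        ≤ ∫⁻ y, (Ioo (l α) (r α)).indicator (fun _ => c α) y := setLIntegral_le_lintegral _ _
      _ = c α * volume (Ioo (l α) (r α)) := lintegral_indicator_const measurableSet_Ioo _
  · calc ∫⁻ y in s, (⋃ α, Ioo (l α) (r α))ᶜ.indicator 1 y ≤ ∫⁻ _ in s, 1 :=
          lintegral_mono fun y => indicator_le_self' (fun _ _ => zero_le_one) y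
      _ = volume s := by simp

theorem setLIntegral_stepDensity_Ioc
    (hdisj : Pairwise (Function.onFun Disjoint fun α => Ioo (l α) (r α))) (α : A) :
    ∫⁻ y in Ioc (l α) (r α), stepDensity l r c y = c α * volume (Ioo (l α) (r α)) := by
  rw [setLIntegral_congr Ioo_ae_eq_Ioc.symm,
    setLIntegral_congr_fun measurableSet_Ioo fun y hy => stepDensity_eq_of_mem hdisj hy,
    setLIntegral_const]

end StepDensity

theorem exists_pos_density_integral_eq {A : Type*} [Countable A] {d : ℝ} {l r μ : A → ℝ}
    (hlr : ∀ α, 0 ≤ l α ∧ l α < r α ∧ r α ≤ d)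
    (hdisj : Pairwise (Function.onFun Disjoint fun α => Ioo (l α) (r α)))
    (hμ : ∀ α, 0 < μ α) (hsum : Summable μ) :
    ∃ w : ℝ → ℝ, (∀ a b, IntervalIntegrable w volume a b) ∧ (∀ y, 0 < w y) ∧
      (∀ y ∉ Ioo 0 d, w y = 1) ∧ ∀ α, ∫ t in l α..r α, w t = μ α := by
  set c : A → ℝ≥0∞ := fun α => ENNReal.ofReal (μ α / (r α - l α))
  have hmass : ∀ α, c α * volume (Ioo (l α) (r α)) = ENNReal.ofReal (μ α) := fun α => by
    have hlen : 0 < r α - l α := sub_pos.2 (hlr α).2.1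
    rw [Real.volume_Ioo, ← ENNReal.ofReal_mul (div_pos (hμ α) hlen).le, div_mul_cancel₀ _ hlen.ne']
  have hW : ∀ y, stepDensity l r c y ≠ 0 ∧ stepDensity l r c y ≠ ∞ := fun y => by
    rcases stepDensity_mem_insert_range (c := c) hdisj y with h | ⟨α, h⟩
    · rw [h]; simp
    · rw [← h]; simp [c, div_pos (hμ α) (sub_pos.2 (hlr α).2.1)]
  have hfin : ∀ a b, ∫⁻ y in Ioc a b, stepDensity l r c y ≠ ∞ := fun a b => by
    refine ne_top_of_le_ne_top ?_ (setLIntegral_stepDensity_le _)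
    rw [tsum_congr hmass, ← ENNReal.ofReal_tsum_of_nonneg (fun α => (hμ α).le) hsum]
    exact ENNReal.add_ne_top.2 ⟨ENNReal.ofReal_ne_top, measure_Ioc_lt_top.ne⟩
  have hW_meas := measurable_stepDensity l r c
  refine ⟨fun y => (stepDensity l r c y).toReal, fun a b => ?_,
    fun y => ENNReal.toReal_pos (hW y).1 (hW y).2, fun y hy => ?_, fun α => ?_⟩
  · exact (intervalIntegrable_iff.2
      (integrable_toReal_of_lintegral_ne_top hW_meas.aemeasurable.restrict (hfin _ _)))
  · simp only
    rw [stepDensity_eq_one fun α hα =>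
      hy ⟨(hlr α).1.trans_lt hα.1, hα.2.trans_le (hlr α).2.2⟩, ENNReal.toReal_one]
  · rw [intervalIntegral.integral_of_le (hlr α).2.1.le,
      integral_toReal hW_meas.aemeasurable.restrict (ae_of_all _ fun y => (hW y).2.lt_top),
      setLIntegral_stepDensity_Ioc hdisj, hmass, ENNReal.toReal_ofReal (hμ α).le]

/-- Lemma: reparametrization of `[0,d]` so that the preimage of each interval `I_α`
has prescribed measure `μ_α`, with absolutely continuous inverse. -/
theorem stmt_11 (d : ℝ) (hd : 0 < d)
    (A : Type*) [Countable A] (l r : A → ℝ)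
    (hlr : ∀ α, 0 ≤ l α ∧ l α < r α ∧ r α ≤ d)
    (hdisj : Pairwise (Function.onFun Disjoint fun α => Set.Ioo (l α) (r α)))
    (μ : A → ℝ) (hμ : ∀ α, 0 < μ α) (hsum : Summable μ) :
    ∃ d' > (0:ℝ), ∃ Ψ Φ : ℝ → ℝ,
      StrictMonoOn Ψ (Set.Icc 0 d') ∧
      ContinuousOn Ψ (Set.Icc 0 d') ∧
      Ψ '' Set.Icc 0 d' = Set.Icc 0 d ∧
      (∀ x ∈ Set.Icc 0 d', Φ (Ψ x) = x) ∧
      (∀ y ∈ Set.Icc 0 d, Ψ (Φ y) = y) ∧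
      (∀ α, volume (Set.Icc 0 d' ∩ Ψ ⁻¹' Set.Icc (l α) (r α)) = ENNReal.ofReal (μ α)) ∧
      AbsolutelyContinuousOn Φ 0 d := by
  obtain ⟨w, hw_int, hw_pos, hw_one, hw_mass⟩ :=
    exists_pos_density_integral_eq hlr hdisj hμ hsum
  let e : ℝ ≃o ℝ := StrictMono.orderIsoOfSurjective (fun y => ∫ t in (0 : ℝ)..y, w t)
    (strictMono_primitive_of_pos hw_int hw_pos 0) (surjective_primitive_of_eqOn_one hw_int hw_one)
  have he0 : e 0 = 0 := intervalIntegral.integral_same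
  refine ⟨e d, he0 ▸ e.strictMono hd, e.symm, e, e.symm.strictMono.strictMonoOn _,
    e.symm.continuous.continuousOn, ?_, fun x _ => e.apply_symm_apply x,
    fun y _ => e.symm_apply_apply y, fun α => ?_, ?_⟩
  · rw [e.symm.image_Icc, e.symm_apply_apply, e.symm_apply_eq.2 he0.symm]
  · obtain ⟨hl, -, hr⟩ := hlr α
    rw [e.symm.preimage_Icc, e.symm_symm, inter_eq_right.2 (Icc_subset_Icc (he0 ▸ e.monotone hl)
      (e.monotone hr)), Real.volume_Icc, ← hw_mass α,
      ← intervalIntegral.integral_interval_sub_left (hw_int 0 _) (hw_int 0 _)]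
    rfl
  · exact (IntervalIntegrable.absolutelyContinuousOnInterval_intervalIntegral (hw_int 0 d)
      left_mem_uIcc).absolutelyContinuousOn
end

section
/- Let 0 < d < 1, ξ > 0, and c_l, c_r ≥ 0 with 0 < max(c_l, c_r) ≤ 10⁻⁹·ξ·d. Then for every interval I = [u,v] with v − u = d, there exists a C² function ω on I such that ω(u) = ω(v) = 0, ω'(x) = c_l for x ∈ [u, u+d/3], ω'(x) = c_r for x ∈ [u+2d/3, v], and max(|ω'(x)|, |ω''(x)|) ≤ ξ for all x ∈ I. -/
/-!
Put `m = d / 3` and `s = (x - (u + m)) / m`. Take `ω'` equal to `cl` for `s ≤ 0`, to `cr` for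
`s ≥ 1`, and in between a quartic in `s` that matches these values with zero slope at both ends,
so that `ω'` is `C¹`. The quartic carries a bump `-45 (cl + cr) s² (1 - s)²` chosen so that
`∫ ω'` over `[u, v]` vanishes; hence the primitive `ω` with `ω u = 0` also vanishes at `v`.
On `[0, 1]` the quartic is `O(max cl cr)` and its `s`-derivative too, so `|ω'|` and
`|ω''| = O(max cl cr / m)` are at most `ξ` under the hypothesis.
-/

open Set

theorem hasDerivAt_ite_le {E : Type*} [NormedAddCommGroup E] [NormedSpace ℝ E]
    {f g f' g' : ℝ → E} {b : ℝ}
    (hf : ∀ x, HasDerivAt f (f' x) x) (hg : ∀ x, HasDerivAt g (g' x) x)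
    (hfg : f b = g b) (hfg' : f' b = g' b) (x : ℝ) :
    HasDerivAt (fun y => if y ≤ b then f y else g y) (if x ≤ b then f' x else g' x) x := by
  rcases lt_trichotomy x b with hx | rfl | hx
  · rw [if_pos hx.le]
    refine (hf x).congr_of_eventuallyEq ?_
    filter_upwards [Iio_mem_nhds hx] with y hy using if_pos (le_of_lt hy)
  · rw [if_pos le_rfl]
    have hleft : HasDerivWithinAt (fun y => if y ≤ x then f y else g y) (f' x) (Iic x) x :=
      (hf x).hasDerivWithinAt.congr (fun y hy => if_pos hy) (if_pos le_rfl)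
    have hright : HasDerivWithinAt (fun y => if y ≤ x then f y else g y) (f' x) (Ici x) x := by
      rw [hfg']
      refine (hg x).hasDerivWithinAt.congr (fun y hy => ?_) (by rw [if_pos le_rfl, hfg])
      rcases eq_or_lt_of_le (mem_Ici.1 hy) with rfl | hy
      · rw [if_pos le_rfl, hfg]
      · exact if_neg (not_le.2 hy)
    simpa [Iic_union_Ici] using hleft.union hright
  · rw [if_neg (not_le.2 hx)]
    refine (hg x).congr_of_eventuallyEq ?_
    filter_upwards [Ioi_mem_nhds hx] with y hy using if_neg (not_le.2 hy)

theorem HasDerivAt.comp_sub_div_const {F : ℝ → ℝ} {F' c m x : ℝ}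
    (hF : HasDerivAt F F' ((x - c) / m)) : HasDerivAt (fun y => F ((y - c) / m)) (F' / m) x :=
  (hF.comp x (((hasDerivAt_id' x).sub_const c).div_const m)).congr_deriv (by ring)

namespace CorrectionProfile

variable (a b : ℝ)

noncomputable def transition (s : ℝ) : ℝ :=
  a + (b - a) * (3 * s ^ 2 - 2 * s ^ 3) - 45 * (a + b) * (s * (1 - s)) ^ 2

noncomputable def transitionDeriv (s : ℝ) : ℝ :=
  s * (1 - s) * (6 * (b - a) - 90 * (a + b) * (1 - 2 * s))

noncomputable def transitionPrimitive (s : ℝ) : ℝ :=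
  a * s + (b - a) * (s ^ 3 - s ^ 4 / 2) - 45 * (a + b) * (s ^ 3 / 3 - s ^ 4 / 2 + s ^ 5 / 5)

theorem hasDerivAt_transitionPrimitive (s : ℝ) :
    HasDerivAt (transitionPrimitive a b) (transition a b s) s := by
  have h3 := hasDerivAt_pow 3 s
  have h4 := (hasDerivAt_pow 4 s).div_const 2
  have h := ((hasDerivAt_id' s).const_mul a).add ((h3.sub h4).const_mul (b - a)) |>.sub
    (((h3.div_const 3).sub h4).add ((hasDerivAt_pow 5 s).div_const 5) |>.const_mul (45 * (a + b)))
  exact h.congr_deriv (by simp only [transition]; push_cast; ring)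

theorem hasDerivAt_transition (s : ℝ) :
    HasDerivAt (transition a b) (transitionDeriv a b s) s := by
  have hw := ((hasDerivAt_id' s).mul ((hasDerivAt_id' s).const_sub 1)).pow 2
  have h := ((((hasDerivAt_pow 2 s).const_mul 3).sub ((hasDerivAt_pow 3 s).const_mul 2)).const_mul
    (b - a)).const_add a |>.sub (hw.const_mul (45 * (a + b)))
  exact h.congr_deriv (by simp only [transitionDeriv, Pi.mul_apply]; push_cast; ring)

theorem abs_transition_le {s : ℝ} (hs : s ∈ Icc (0 : ℝ) 1) :
    |transition a b s| ≤ 9 * max |a| |b| := by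
  obtain ⟨hs0, hs1⟩ := hs
  set M := max |a| |b|
  have ha : |a| ≤ M := le_max_left _ _
  have hb : |b| ≤ M := le_max_right _ _
  have hw : (s * (1 - s)) ^ 2 ≤ 1 / 16 := by
    have : 0 ≤ s * (1 - s) := mul_nonneg hs0 (by linarith)
    nlinarith [sq_nonneg (s - 1 / 2)]
  have hh : |3 * s ^ 2 - 2 * s ^ 3| ≤ 1 := by
    rw [abs_le]; constructor <;> nlinarith [mul_nonneg (mul_nonneg hs0 hs0) (sub_nonneg.2 hs1)]
  calc |transition a b s|
      ≤ |a| + |b - a| * |3 * s ^ 2 - 2 * s ^ 3| + 45 * |a + b| * (s * (1 - s)) ^ 2 := by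
        unfold transition
        refine (abs_sub _ _).trans ?_
        rw [abs_mul, abs_mul, abs_of_nonneg (sq_nonneg (s * (1 - s))),
          abs_of_pos (by norm_num : (0 : ℝ) < 45)]
        gcongr
        exact (abs_add_le _ _).trans (by rw [abs_mul])
    _ ≤ M + (M + M) * 1 + 45 * (M + M) * (1 / 16) := by
        gcongr
        · exact (abs_sub _ _).trans (add_le_add hb ha)
        · exact (abs_add_le _ _).trans (add_le_add ha hb)
    _ ≤ 9 * M := by nlinarith [abs_nonneg a, ha]

theorem abs_transitionDeriv_le {s : ℝ} (hs : s ∈ Icc (0 : ℝ) 1) :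
    |transitionDeriv a b s| ≤ 48 * max |a| |b| := by
  obtain ⟨hs0, hs1⟩ := hs
  set M := max |a| |b|
  have ha : |a| ≤ M := le_max_left _ _
  have hb : |b| ≤ M := le_max_right _ _
  have hw0 : 0 ≤ s * (1 - s) := mul_nonneg hs0 (by linarith)
  have hw : s * (1 - s) ≤ 1 / 4 := by nlinarith [sq_nonneg (s - 1 / 2)]
  have hl : |1 - 2 * s| ≤ 1 := by rw [abs_le]; constructor <;> linarith
  calc |transitionDeriv a b s|
      ≤ s * (1 - s) * (6 * |b - a| + 90 * |a + b| * |1 - 2 * s|) := by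
        unfold transitionDeriv
        rw [abs_mul, abs_of_nonneg hw0]
        gcongr
        refine (abs_sub _ _).trans ?_
        simp only [abs_mul, abs_of_pos (by norm_num : (0 : ℝ) < 6),
          abs_of_pos (by norm_num : (0 : ℝ) < 90)]
        rfl
    _ ≤ 1 / 4 * (6 * (M + M) + 90 * (M + M) * 1) := by
        gcongr
        · exact (abs_sub _ _).trans (add_le_add hb ha)
        · exact (abs_add_le _ _).trans (add_le_add ha hb)
    _ = 48 * M := by ring

theorem transition_zero : transition a b 0 = a := by norm_num [transition]

theorem transition_one : transition a b 1 = b := by norm_num [transition]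

theorem transitionDeriv_zero : transitionDeriv a b 0 = 0 := by norm_num [transitionDeriv]

theorem transitionDeriv_one : transitionDeriv a b 1 = 0 := by norm_num [transitionDeriv]

theorem transitionPrimitive_zero : transitionPrimitive a b 0 = 0 := by
  norm_num [transitionPrimitive]

theorem transitionPrimitive_one : transitionPrimitive a b 1 = -(a + b) := by
  norm_num [transitionPrimitive]; ring

noncomputable def profile (s : ℝ) : ℝ :=
  if s ≤ 0 then a * (s + 1) else if s ≤ 1 then a + transitionPrimitive a b s else b * (s - 2)

noncomputable def profileDeriv (s : ℝ) : ℝ :=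
  if s ≤ 0 then a else if s ≤ 1 then transition a b s else b

noncomputable def profileDeriv2 (s : ℝ) : ℝ :=
  if s ≤ 0 then 0 else if s ≤ 1 then transitionDeriv a b s else 0

theorem hasDerivAt_profile (s : ℝ) : HasDerivAt (profile a b) (profileDeriv a b s) s := by
  have hleft (t : ℝ) : HasDerivAt (fun t => a * (t + 1)) a t := by
    simpa using ((hasDerivAt_id' t).add_const 1).const_mul a
  have hright (t : ℝ) : HasDerivAt (fun t => b * (t - 2)) b t := by
    simpa using ((hasDerivAt_id' t).sub_const 2).const_mul b
  refine hasDerivAt_ite_le hleft (hasDerivAt_ite_le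
    (fun t => (hasDerivAt_transitionPrimitive a b t).const_add a) hright ?_ ?_) ?_ ?_ s
  · rw [transitionPrimitive_one]; ring
  · exact transition_one a b
  · rw [if_pos zero_le_one, transitionPrimitive_zero]; ring
  · rw [if_pos zero_le_one, transition_zero]

theorem hasDerivAt_profileDeriv (s : ℝ) :
    HasDerivAt (profileDeriv a b) (profileDeriv2 a b s) s := by
  refine hasDerivAt_ite_le (fun t => hasDerivAt_const t a) (hasDerivAt_ite_le
    (hasDerivAt_transition a b) (fun t => hasDerivAt_const t b) ?_ ?_) ?_ ?_ s
  · exact transition_one a b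
  · exact transitionDeriv_one a b
  · rw [if_pos zero_le_one, transition_zero]
  · rw [if_pos zero_le_one, transitionDeriv_zero]

theorem continuous_profileDeriv2 : Continuous (profileDeriv2 a b) := by
  have hinner : Continuous fun s => if s ≤ 1 then transitionDeriv a b s else 0 :=
    Continuous.if_le (by unfold transitionDeriv; fun_prop) continuous_const continuous_id
      continuous_const fun s hs => by rw [hs, transitionDeriv_one]
  exact Continuous.if_le continuous_const hinner continuous_id continuous_const
    fun s hs => by rw [hs, if_pos zero_le_one, transitionDeriv_zero]

theorem profile_neg_one : profile a b (-1) = 0 := by norm_num [profile]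

theorem profile_two : profile a b 2 = 0 := by norm_num [profile]

theorem profileDeriv_of_nonpos {s : ℝ} (hs : s ≤ 0) : profileDeriv a b s = a := if_pos hs

theorem profileDeriv_of_one_le {s : ℝ} (hs : 1 ≤ s) : profileDeriv a b s = b := by
  rcases hs.eq_or_lt with rfl | hs
  · simp [profileDeriv, transition_one]
  · simp [profileDeriv, hs.not_ge, (zero_lt_one.trans hs).not_ge]

theorem abs_profileDeriv_le (s : ℝ) : |profileDeriv a b s| ≤ 9 * max |a| |b| := by
  unfold profileDeriv
  split_ifs with h0 h1
  · linarith [le_max_left |a| |b|, abs_nonneg a]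
  · exact abs_transition_le a b ⟨(not_le.1 h0).le, h1⟩
  · linarith [le_max_right |a| |b|, abs_nonneg b]

theorem abs_profileDeriv2_le (s : ℝ) : |profileDeriv2 a b s| ≤ 48 * max |a| |b| := by
  unfold profileDeriv2
  split_ifs with h0 h1
  · rw [abs_zero]; positivity
  · exact abs_transitionDeriv_le a b ⟨(not_le.1 h0).le, h1⟩
  · rw [abs_zero]; positivity

end CorrectionProfile

open CorrectionProfile in
theorem stmt_12_general (d ξ cl cr : ℝ)
    (hd0 : 0 < d) (hd1 : d < 1) (hξ : 0 < ξ)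
    (hcl : 0 ≤ cl) (hcr : 0 ≤ cr)
    (hmax : max cl cr ≤ ξ * d / 10 ^ 9)
    (u v : ℝ) (huv : v - u = d) :
    ∃ ω ω' ω'' : ℝ → ℝ,
      (∀ x ∈ Set.Icc u v, HasDerivWithinAt ω (ω' x) (Set.Icc u v) x) ∧
      (∀ x ∈ Set.Icc u v, HasDerivWithinAt ω' (ω'' x) (Set.Icc u v) x) ∧
      ContinuousOn ω'' (Set.Icc u v) ∧
      ω u = 0 ∧ ω v = 0 ∧
      (∀ x ∈ Set.Icc u (u + d/3), ω' x = cl) ∧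
      (∀ x ∈ Set.Icc (u + 2*d/3) v, ω' x = cr) ∧
      (∀ x ∈ Set.Icc u v, max |ω' x| |ω'' x| ≤ ξ) := by
  set m := d / 3 with hm
  have hm0 : 0 < m := by positivity
  set s : ℝ → ℝ := fun x => (x - (u + m)) / m with hs
  have hM : max |cl| |cr| = max cl cr := by rw [abs_of_nonneg hcl, abs_of_nonneg hcr]
  refine ⟨fun x => m * profile cl cr (s x), fun x => profileDeriv cl cr (s x),
    fun x => profileDeriv2 cl cr (s x) / m, fun x _ => ?_, fun x _ => ?_, ?_, ?_, ?_,
    fun x hx => ?_, fun x hx => ?_, fun x _ => ?_⟩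
  · exact (((hasDerivAt_profile cl cr _).comp_sub_div_const).const_mul m).congr_deriv
      (mul_div_cancel₀ _ hm0.ne') |>.hasDerivWithinAt
  · exact (hasDerivAt_profileDeriv cl cr _).comp_sub_div_const.hasDerivWithinAt
  · exact ((continuous_profileDeriv2 cl cr).comp (by fun_prop)).div_const m |>.continuousOn
  · simp only [hs]
    rw [show (u - (u + m)) / m = -1 by field_simp; ring, profile_neg_one, mul_zero]
  · simp only [hs]
    rw [show (v - (u + m)) / m = 2 by field_simp; linarith, profile_two, mul_zero]
  · exact profileDeriv_of_nonpos cl cr (div_nonpos_of_nonpos_of_nonneg (by linarith [hx.2]) hm0.le)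
  · exact profileDeriv_of_one_le cl cr ((le_div_iff₀ hm0).2 (by linarith [hx.1]))
  · rw [abs_div, abs_of_pos hm0]
    refine max_le ((abs_profileDeriv_le cl cr _).trans ?_)
      ((div_le_iff₀ hm0).2 ((abs_profileDeriv2_le cl cr _).trans ?_))
    · rw [hM]; nlinarith
    · rw [hM]; nlinarith

/-- Lemma: existence of a `C²` correction function `ω` on `I = [u,v]`. -/
theorem stmt_12 (d ξ cl cr : ℝ)
    (hd0 : 0 < d) (hd1 : d < 1) (hξ : 0 < ξ)
    (hcl : 0 ≤ cl) (hcr : 0 ≤ cr)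
    (hmax0 : 0 < max cl cr) (hmax : max cl cr ≤ ξ * d / 10 ^ 9)
    (u v : ℝ) (huv : v - u = d) :
    ∃ ω ω' ω'' : ℝ → ℝ,
      (∀ x ∈ Set.Icc u v, HasDerivWithinAt ω (ω' x) (Set.Icc u v) x) ∧
      (∀ x ∈ Set.Icc u v, HasDerivWithinAt ω' (ω'' x) (Set.Icc u v) x) ∧
      ContinuousOn ω'' (Set.Icc u v) ∧
      ω u = 0 ∧ ω v = 0 ∧
      (∀ x ∈ Set.Icc u (u + d/3), ω' x = cl) ∧
      (∀ x ∈ Set.Icc (u + 2*d/3) v, ω' x = cr) ∧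
      (∀ x ∈ Set.Icc u v, max |ω' x| |ω'' x| ≤ ξ) :=
  stmt_12_general d ξ cl cr hd0 hd1 hξ hcl hcr hmax u v huv
end

section
/- Let V > 0, η > 0, and c_l, c_r ≥ 0 be such that d := √(V/η) < 1 and max(c_l,c_r) ≤ 10⁻¹⁰·d²·η. Then for every interval J of length V and every interval I = [u,v] of length d, there exists an increasing C² homeomorphism φ : I → J with φ'(u) = c_l, φ'(v) = c_r, φ''(u) = φ''(v) = 0, 0 < φ'(x) ≤ 19·√(ηV) for x in the interior of I, and |φ''(x)| ≤ 19·η for all x ∈ I. -/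
/-!
Rescale a fixed profile: with `e = √(ηV) = η d`, put `φ x = p + d F ((x - u) / d)`, where `F' = f`
on `[0, 1]` is the cubic Hermite interpolant of the end slopes `c_l, c_r` (zero end curvature)
plus a multiple of `t²(1-t)²` chosen so that `∫₀¹ f = e`. Then `φ` covers `[p, p + d e] = [p, q]`,
and since `c_l, c_r ≤ e` all coefficients of `f` are of size `O(e)`, which gives
`φ' ≤ 19 e = 19 √(ηV)` and `|φ''| ≤ 19 e / d = 19 η`.
-/

open Set

section Profile

variable (a b e : ℝ)

/-- The coefficient `30 e - 15 (a + b)` makes `∫₀¹ profile a b e = e`. -/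
noncomputable def profile (t : ℝ) : ℝ :=
  a * (1 - 3 * t ^ 2 + 2 * t ^ 3) + b * (3 * t ^ 2 - 2 * t ^ 3)
    + (30 * e - 15 * (a + b)) * (t ^ 2 * (1 - t) ^ 2)

noncomputable def profilePrimitive (t : ℝ) : ℝ :=
  a * (t - t ^ 3 + t ^ 4 / 2) + b * (t ^ 3 - t ^ 4 / 2)
    + (30 * e - 15 * (a + b)) * (t ^ 3 / 3 - t ^ 4 / 2 + t ^ 5 / 5)

noncomputable def profileDeriv (t : ℝ) : ℝ :=
  a * (-6 * t + 6 * t ^ 2) + b * (6 * t - 6 * t ^ 2)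
    + (30 * e - 15 * (a + b)) * (2 * t - 6 * t ^ 2 + 4 * t ^ 3)

theorem hasDerivAt_profilePrimitive (t : ℝ) :
    HasDerivAt (profilePrimitive a b e) (profile a b e t) t := by
  have h := ((((hasDerivAt_id t).sub (hasDerivAt_pow 3 t)).add
    ((hasDerivAt_pow 4 t).div_const 2)).const_mul a).add
      (((hasDerivAt_pow 3 t).sub ((hasDerivAt_pow 4 t).div_const 2)).const_mul b) |>.add
      ((((hasDerivAt_pow 3 t).div_const 3).sub ((hasDerivAt_pow 4 t).div_const 2)).add
        ((hasDerivAt_pow 5 t).div_const 5) |>.const_mul (30 * e - 15 * (a + b)))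
  refine h.congr_deriv ?_
  simp only [profile]
  push_cast
  ring

theorem hasDerivAt_profile (t : ℝ) : HasDerivAt (profile a b e) (profileDeriv a b e t) t := by
  have h := (((((hasDerivAt_const t (1 : ℝ)).sub ((hasDerivAt_pow 2 t).const_mul 3)).add
    ((hasDerivAt_pow 3 t).const_mul 2)).const_mul a).add
      ((((hasDerivAt_pow 2 t).const_mul 3).sub ((hasDerivAt_pow 3 t).const_mul 2)).const_mul b)).add
      ((((hasDerivAt_pow 2 t).mul ((hasDerivAt_id' t).const_sub 1 |>.pow 2))
        |>.const_mul (30 * e - 15 * (a + b))))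
  refine h.congr_deriv ?_
  simp only [profileDeriv, Pi.pow_apply]
  push_cast
  ring

theorem profilePrimitive_zero : profilePrimitive a b e 0 = 0 := by
  simp [profilePrimitive]

theorem profilePrimitive_one : profilePrimitive a b e 1 = e := by
  simp only [profilePrimitive]
  ring

theorem profile_zero : profile a b e 0 = a := by
  simp [profile]

theorem profile_one : profile a b e 1 = b := by
  simp only [profile]
  ring

theorem profileDeriv_zero : profileDeriv a b e 0 = 0 := by
  simp [profileDeriv]

theorem profileDeriv_one : profileDeriv a b e 1 = 0 := by
  simp only [profileDeriv]
  ring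

variable {a b e}

/-- Both Hermite cubics dominate `t²(1-t)²` on `[0, 1]`, so `profile a b e t ≥ 2 e t²(1-t)²`. -/
theorem profile_pos (he : 0 < e) (ha : 0 ≤ a) (hb : 0 ≤ b) (hae : a ≤ e) (hbe : b ≤ e)
    {t : ℝ} (ht : t ∈ Ioo 0 1) : 0 < profile a b e t := by
  obtain ⟨ht0, ht1⟩ := ht
  have hq : 0 < t ^ 2 * (1 - t) ^ 2 := by have := sub_pos.2 ht1; positivity
  have h0 : t ^ 2 * (1 - t) ^ 2 ≤ 1 - 3 * t ^ 2 + 2 * t ^ 3 := by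
    nlinarith [mul_nonneg (sq_nonneg (1 - t)) (by nlinarith : 0 ≤ 1 + 2 * t - t ^ 2)]
  have h1 : t ^ 2 * (1 - t) ^ 2 ≤ 3 * t ^ 2 - 2 * t ^ 3 := by
    nlinarith [mul_nonneg (sq_nonneg t) (by nlinarith : 0 ≤ 2 - t ^ 2)]
  unfold profile
  nlinarith [mul_nonneg ha (sub_nonneg.2 h0), mul_nonneg hb (sub_nonneg.2 h1),
    mul_nonneg (sub_nonneg.2 hae) hq.le, mul_nonneg (sub_nonneg.2 hbe) hq.le, mul_pos he hq]

theorem profile_le (ha : 0 ≤ a) (hb : 0 ≤ b) (hae : a ≤ e) (hbe : b ≤ e)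
    {t : ℝ} (ht : t ∈ Icc 0 1) : profile a b e t ≤ 19 * e := by
  obtain ⟨ht0, ht1⟩ := ht
  have hK : 0 ≤ 30 * e - 15 * (a + b) := by linarith
  unfold profile
  nlinarith [mul_nonneg ha (mul_nonneg (sq_nonneg t) (by linarith : (0 : ℝ) ≤ 3 - 2 * t)),
    mul_nonneg hb (mul_nonneg (sq_nonneg (1 - t)) (by linarith : (0 : ℝ) ≤ 1 + 2 * t)),
    mul_nonneg hK (mul_nonneg (sq_nonneg (t - 1 / 2)) (by nlinarith : (0 : ℝ) ≤ 1 / 4 + t * (1 - t)))]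

theorem abs_profileDeriv_le (ha : 0 ≤ a) (hb : 0 ≤ b) (hae : a ≤ e) (hbe : b ≤ e)
    {t : ℝ} (ht : t ∈ Icc 0 1) : |profileDeriv a b e t| ≤ 19 * e := by
  obtain ⟨ht0, ht1⟩ := ht
  have hK : 0 ≤ 30 * e - 15 * (a + b) := by linarith
  have ht : 0 ≤ t * (1 - t) := mul_nonneg ht0 (by linarith)
  unfold profileDeriv
  rw [abs_le]
  constructor
  · nlinarith [mul_nonneg hK (mul_nonneg ht (by linarith : (0 : ℝ) ≤ 1 - t)),
      mul_nonneg hK (sq_nonneg (t - 1 / 2)), mul_nonneg hb (sq_nonneg (t - 1 / 2)),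
      mul_nonneg ha (sq_nonneg (t - 1 / 2)), mul_nonneg ha ht, mul_nonneg hb ht]
  · nlinarith [mul_nonneg hK (mul_nonneg ht ht0),
      mul_nonneg hK (sq_nonneg (t - 1 / 2)), mul_nonneg hb (sq_nonneg (t - 1 / 2)),
      mul_nonneg ha (sq_nonneg (t - 1 / 2)), mul_nonneg ha ht, mul_nonneg hb ht]

end Profile

theorem hasDerivAt_comp_sub_div {F F' : ℝ → ℝ} (hF : ∀ t, HasDerivAt F (F' t) t) (u d x : ℝ) :
    HasDerivAt (fun y ↦ F ((y - u) / d)) (F' ((x - u) / d) / d) x :=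
  ((hF _).comp x (((hasDerivAt_id' x).sub_const u).div_const d)).congr_deriv (mul_one_div _ _)

theorem exists_strictMonoOn_Icc_of_slopes_le {a b e : ℝ} (p : ℝ) {u v : ℝ} (huv : u < v)
    (he : 0 < e) (ha : 0 ≤ a) (hb : 0 ≤ b) (hae : a ≤ e) (hbe : b ≤ e) :
    ∃ φ φ' φ'' : ℝ → ℝ,
      StrictMonoOn φ (Icc u v) ∧
      φ '' Icc u v = Icc p (p + (v - u) * e) ∧
      (∀ x ∈ Icc u v, HasDerivWithinAt φ (φ' x) (Icc u v) x) ∧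
      (∀ x ∈ Icc u v, HasDerivWithinAt φ' (φ'' x) (Icc u v) x) ∧
      ContinuousOn φ'' (Icc u v) ∧
      φ' u = a ∧ φ' v = b ∧ φ'' u = 0 ∧ φ'' v = 0 ∧
      (∀ x ∈ Ioo u v, 0 < φ' x ∧ φ' x ≤ 19 * e) ∧
      (∀ x ∈ Icc u v, |φ'' x| ≤ 19 * e / (v - u)) := by
  set d := v - u
  have hd : 0 < d := sub_pos.2 huv
  set s : ℝ → ℝ := fun x ↦ (x - u) / d
  have hsu : s u = 0 := by simp [s]
  have hsv : s v = 1 := div_self hd.ne'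
  have hs_Icc : ∀ x ∈ Icc u v, s x ∈ Icc 0 1 := fun x hx ↦
    ⟨div_nonneg (by linarith [hx.1]) hd.le, (div_le_one hd).2 (by linarith [hx.2])⟩
  have hs_Ioo : ∀ x ∈ Ioo u v, s x ∈ Ioo 0 1 := fun x hx ↦
    ⟨div_pos (by linarith [hx.1]) hd, (div_lt_one hd).2 (by linarith [hx.2])⟩
  have hφ : ∀ x, HasDerivAt (fun y ↦ p + d * profilePrimitive a b e (s y)) (profile a b e (s x)) x :=
    fun x ↦ (((hasDerivAt_comp_sub_div (hasDerivAt_profilePrimitive a b e) u d x).const_mul d)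
      |>.const_add p).congr_deriv (mul_div_cancel₀ _ hd.ne')
  have hφ' : ∀ x, HasDerivAt (fun y ↦ profile a b e (s y)) (profileDeriv a b e (s x) / d) x :=
    hasDerivAt_comp_sub_div (hasDerivAt_profile a b e) u d
  have hφ_cont : ContinuousOn (fun y ↦ p + d * profilePrimitive a b e (s y)) (Icc u v) :=
    fun x _ ↦ (hφ x).continuousAt.continuousWithinAt
  have hmono : StrictMonoOn (fun y ↦ p + d * profilePrimitive a b e (s y)) (Icc u v) := by
    refine strictMonoOn_of_hasDerivWithinAt_pos (convex_Icc u v) hφ_cont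
      (fun x _ ↦ (hφ x).hasDerivWithinAt) fun x hx ↦ ?_
    rw [interior_Icc] at hx
    exact profile_pos he ha hb hae hbe (hs_Ioo x hx)
  refine ⟨_, _, fun x ↦ profileDeriv a b e (s x) / d, hmono, ?_, fun x _ ↦ (hφ x).hasDerivWithinAt,
    fun x _ ↦ (hφ' x).hasDerivWithinAt, ?_, ?_, ?_, ?_, ?_, fun x hx ↦ ?_, fun x hx ↦ ?_⟩
  · rw [hφ_cont.image_Icc_of_monotoneOn huv.le hmono.monotoneOn]
    simp only [hsu, hsv, profilePrimitive_zero, profilePrimitive_one, mul_zero, add_zero]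
  · exact Continuous.continuousOn (by unfold profileDeriv; fun_prop)
  · simp only [hsu, profile_zero]
  · simp only [hsv, profile_one]
  · simp only [hsu, profileDeriv_zero, zero_div]
  · simp only [hsv, profileDeriv_one, zero_div]
  · exact ⟨profile_pos he ha hb hae hbe (hs_Ioo x hx),
      profile_le ha hb hae hbe (Ioo_subset_Icc_self (hs_Ioo x hx))⟩
  · rw [abs_div, abs_of_pos hd]
    exact div_le_div_of_nonneg_right (abs_profileDeriv_le ha hb hae hbe (hs_Icc x hx)) hd.le

/-- Lemma: existence of an increasing `C²` homeomorphism `φ : I → J` with prescribed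
boundary derivatives and bounds. -/
theorem stmt_13 (V η cl cr : ℝ) (hV : 0 < V) (hη : 0 < η)
    (d : ℝ) (hd : d = Real.sqrt (V / η)) (hd1 : d < 1)
    (hcl : 0 ≤ cl) (hcr : 0 ≤ cr)
    (hmax : max cl cr ≤ d ^ 2 * η / 10 ^ 10)
    (p q u v : ℝ) (hJ : q - p = V) (hI : v - u = d) :
    ∃ φ φ' φ'' : ℝ → ℝ,
      StrictMonoOn φ (Set.Icc u v) ∧
      φ '' Set.Icc u v = Set.Icc p q ∧
      (∀ x ∈ Set.Icc u v, HasDerivWithinAt φ (φ' x) (Set.Icc u v) x) ∧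
      (∀ x ∈ Set.Icc u v, HasDerivWithinAt φ' (φ'' x) (Set.Icc u v) x) ∧
      ContinuousOn φ'' (Set.Icc u v) ∧
      φ' u = cl ∧ φ' v = cr ∧ φ'' u = 0 ∧ φ'' v = 0 ∧
      (∀ x ∈ Set.Ioo u v, 0 < φ' x ∧ φ' x ≤ 19 * Real.sqrt (η * V)) ∧
      (∀ x ∈ Set.Icc u v, |φ'' x| ≤ 19 * η) := by
  have hd0 : 0 < d := hd ▸ Real.sqrt_pos.2 (div_pos hV hη)
  have hV_eq : V = η * d ^ 2 := by
    rw [hd, Real.sq_sqrt (div_pos hV hη).le]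
    field_simp
  have hsqrt : Real.sqrt (η * V) = η * d := by
    rw [hV_eq, show η * (η * d ^ 2) = (η * d) ^ 2 by ring, Real.sqrt_sq (by positivity)]
  have hmax_le : max cl cr ≤ η * d := by
    refine hmax.trans ?_
    nlinarith [mul_pos (mul_pos hη hd0) (sub_pos.2 hd1), mul_pos (mul_pos hη hd0) hd0]
  have huv : u < v := by linarith
  obtain ⟨φ, φ', φ'', h⟩ := exists_strictMonoOn_Icc_of_slopes_le p huv
    (mul_pos hη hd0) hcl hcr ((le_max_left _ _).trans hmax_le) ((le_max_right _ _).trans hmax_le)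
  rw [hI, show p + d * (η * d) = q by linarith, mul_div_assoc, mul_div_cancel_right₀ _ hd0.ne',
    ← hsqrt] at h
  exact ⟨φ, φ', φ'', h⟩
end

section
/- Let f : [0,1] → ℝ be continuous. Then a point x ∈ (0,1) lies outside the set D_f (points of no local C² arc-length parametrization) if and only if there is an open interval (c,d) ∋ x on which f is strictly monotone; moreover for real-valued f, D_f = K_f ∪ E_f, where K_f is the set of points of varying monotonicity (complement of the union of maximal intervals of constancy or strict monotonicity) and E_f is the maximal open set on which f is locally constant. -/
open MeasureTheory

/-- `g` restricted to `[c,d]` admits a `C²` arc-length parametrization. -/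
def HasC2ArcLengthParam (g : ℝ → ℝ) (c d : ℝ) : Prop :=
  ∃ (c' d' : ℝ) (φ : ℝ → ℝ), c' < d' ∧
    StrictMonoOn φ (Set.Icc c' d') ∧ ContinuousOn φ (Set.Icc c' d') ∧
    φ '' Set.Icc c' d' = Set.Icc c d ∧
    (∀ u v, c' ≤ u → u ≤ v → v ≤ d' →
      eVariationOn (g ∘ φ) (Set.Icc u v) = ENNReal.ofReal (v - u)) ∧
    ∃ G' G'' : ℝ → ℝ,
      (∀ x ∈ Set.Icc c' d', HasDerivWithinAt (g ∘ φ) (G' x) (Set.Icc c' d') x) ∧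
      (∀ x ∈ Set.Icc c' d', HasDerivWithinAt G' (G'' x) (Set.Icc c' d') x) ∧
      ContinuousOn G'' (Set.Icc c' d')

/-- The singular set `D_g`. -/
def Dset (g : ℝ → ℝ) : Set ℝ :=
  {x ∈ Set.Icc (0:ℝ) 1 | ¬ ∃ c d : ℝ, c < d ∧ x ∈ Set.Ioo c d ∧
    Set.Ioo c d ⊆ Set.Icc (0:ℝ) 1 ∧ HasC2ArcLengthParam g c d}

/-- `K_f`: points of varying monotonicity — points of `[0,1]` having no open interval
neighborhood inside `[0,1]` on which `f` is constant or strictly monotone. -/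
def Kset (f : ℝ → ℝ) : Set ℝ :=
  {x ∈ Set.Icc (0:ℝ) 1 | ¬ ∃ c d : ℝ, c < d ∧ x ∈ Set.Ioo c d ∧
    Set.Ioo c d ⊆ Set.Icc (0:ℝ) 1 ∧
    ((∀ y ∈ Set.Ioo c d, f y = f x) ∨ StrictMonoOn f (Set.Ioo c d) ∨
      StrictAntiOn f (Set.Ioo c d))}

/-- `E_f`: the maximal open subset of `(0,1)` on which `f` is locally constant. -/
def Eset (f : ℝ → ℝ) : Set ℝ :=
  {x ∈ Set.Ioo (0:ℝ) 1 | ∃ c d : ℝ, c < d ∧ x ∈ Set.Ioo c d ∧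
    Set.Ioo c d ⊆ Set.Ioo (0:ℝ) 1 ∧ ∀ y ∈ Set.Ioo c d, f y = f x}

/-!
A continuous strictly increasing piece of `f` is parametrized by arc length by its own inverse,
along which `f` becomes `t ↦ t`; a decreasing piece is handled by the reflection `f ↦ -f`.
Conversely, let `f ∘ φ` have a `C¹` derivative `G'` and variation equal to arc length. Where
`|G'| < 1` near a point, the mean value theorem makes `f ∘ φ` Lipschitz with a constant `< 1` there,
pushing its variation below the length; so `|G'| ≥ 1` inside, `G'` has constant sign by Darboux,
and `f` is strictly monotone. Hence `x ∉ D_f` exactly when `f` is strictly monotone near `x`, and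
since no point is both a point of local constancy and of strict monotonicity, `D_f = K_f ∪ E_f`.
-/

open Set Topology NNReal

lemma eVariationOn_neg (F : ℝ → ℝ) (s : Set ℝ) :
    eVariationOn (fun t => -F t) s = eVariationOn F s := by
  simp only [eVariationOn, edist_neg_neg]

lemma LipschitzOnWith.eVariationOn_Icc_le_s17 {h : ℝ → ℝ} {K : ℝ≥0} {u v : ℝ}
    (hh : LipschitzOnWith K h (Icc u v)) :
    eVariationOn h (Icc u v) ≤ K * ENNReal.ofReal (v - u) := by
  simpa using hh.comp_eVariationOn_le (mapsTo_id _)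

lemma StrictMonoOn.image_of_comp {g φ : ℝ → ℝ} {s : Set ℝ} (h : StrictMonoOn (g ∘ φ) s)
    (hφ : MonotoneOn φ s) : StrictMonoOn g (φ '' s) := by
  rintro _ ⟨x, hx, rfl⟩ _ ⟨y, hy, rfl⟩ hxy
  exact h hx hy (lt_of_not_ge fun hyx => hxy.not_ge (hφ hy hx hyx))

lemma StrictAntiOn.image_of_comp {g φ : ℝ → ℝ} {s : Set ℝ} (h : StrictAntiOn (g ∘ φ) s)
    (hφ : MonotoneOn φ s) : StrictAntiOn g (φ '' s) := by
  rintro _ ⟨x, hx, rfl⟩ _ ⟨y, hy, rfl⟩ hxy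
  exact h hx hy (lt_of_not_ge fun hyx => hxy.not_ge (hφ hy hx hyx))

lemma StrictMonoOn.exists_continuousOn_rightInverse {f : ℝ → ℝ} {a b : ℝ} (hab : a ≤ b)
    (hmono : StrictMonoOn f (Icc a b)) (hcont : ContinuousOn f (Icc a b)) :
    ∃ φ : ℝ → ℝ, StrictMonoOn φ (Icc (f a) (f b)) ∧ ContinuousOn φ (Icc (f a) (f b)) ∧
      φ '' Icc (f a) (f b) = Icc a b ∧ EqOn (f ∘ φ) id (Icc (f a) (f b)) := by
  have hfab : f a ≤ f b := hmono.monotoneOn (left_mem_Icc.2 hab) (right_mem_Icc.2 hab) hab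
  let e : Icc a b ≃o Icc (f a) (f b) := (hmono.orderIso f _).trans
    (OrderIso.setCongr _ _ (hcont.image_Icc_of_monotoneOn hab hmono.monotoneOn))
  refine ⟨IccExtend hfab (Subtype.val ∘ e.symm), ?_, ?_, ?_, ?_⟩
  · intro s hs t ht hst
    simp only [IccExtend_of_mem _ _ hs, IccExtend_of_mem _ _ ht, Function.comp_apply]
    exact e.symm.strictMono (Subtype.mk_lt_mk.2 hst)
  · exact (continuous_IccExtend_iff.2 (continuous_subtype_val.comp e.symm.continuous)).continuousOn
  · refine Subset.antisymm ?_ fun y hy => ⟨e ⟨y, hy⟩, (e ⟨y, hy⟩).2, ?_⟩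
    · rintro _ ⟨t, ht, rfl⟩
      simp only [IccExtend_of_mem _ _ ht, Function.comp_apply, Subtype.coe_prop]
    · simp only [IccExtend_val, Function.comp_apply, OrderIso.symm_apply_apply]
  · intro t ht
    simp only [Function.comp_apply, IccExtend_of_mem _ _ ht]
    exact congrArg Subtype.val (e.apply_symm_apply ⟨t, ht⟩)

lemma HasC2ArcLengthParam.neg {g : ℝ → ℝ} {c d : ℝ} (hg : HasC2ArcLengthParam g c d) :
    HasC2ArcLengthParam (fun x => -g x) c d := by
  obtain ⟨c', d', φ, hcd', hφm, hφc, hφim, hvar, G', G'', hG', hG'', hG''c⟩ := hg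
  refine ⟨c', d', φ, hcd', hφm, hφc, hφim, fun u v hu huv hv => ?_,
    fun x => -G' x, fun x => -G'' x, fun x hx => (hG' x hx).neg, fun x hx => (hG'' x hx).neg,
    hG''c.neg⟩
  rw [← hvar u v hu huv hv]
  exact eVariationOn_neg (g ∘ φ) _

lemma StrictMonoOn.hasC2ArcLengthParam {f : ℝ → ℝ} {a b : ℝ} (hab : a < b)
    (hmono : StrictMonoOn f (Icc a b)) (hcont : ContinuousOn f (Icc a b)) :
    HasC2ArcLengthParam f a b := by
  obtain ⟨φ, hφm, hφc, hφim, hfφ⟩ := hmono.exists_continuousOn_rightInverse hab.le hcont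
  refine ⟨f a, f b, φ, hmono (left_mem_Icc.2 hab.le) (right_mem_Icc.2 hab.le) hab, hφm, hφc,
    hφim, fun u v hu huv hv => ?_, fun _ => 1, fun _ => 0,
    fun x hx => (hasDerivWithinAt_id x _).congr (fun y hy => hfφ hy) (hfφ hx),
    fun x _ => hasDerivWithinAt_const x _ 1, continuousOn_const⟩
  rw [eVariationOn.eq_of_eqOn (hfφ.mono (Icc_subset_Icc hu hv)), eVariationOn_id_Icc]

lemma StrictAntiOn.hasC2ArcLengthParam {f : ℝ → ℝ} {a b : ℝ} (hab : a < b)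
    (hanti : StrictAntiOn f (Icc a b)) (hcont : ContinuousOn f (Icc a b)) :
    HasC2ArcLengthParam f a b := by
  simpa using (hanti.neg.hasC2ArcLengthParam hab hcont.neg).neg

lemma one_le_of_lipschitzOnWith_of_eVariationOn_eq {h : ℝ → ℝ} {K : ℝ≥0} {u v : ℝ}
    (huv : u < v) (hK : LipschitzOnWith K h (Icc u v))
    (hvar : eVariationOn h (Icc u v) = ENNReal.ofReal (v - u)) : 1 ≤ K := by
  have hle : 1 * ENNReal.ofReal (v - u) ≤ K * ENNReal.ofReal (v - u) := by
    simpa [hvar] using hK.eVariationOn_Icc_le_s17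
  exact_mod_cast (ENNReal.mul_le_mul_iff_left (by simpa using huv) ENNReal.ofReal_ne_top).1 hle

lemma one_le_nnnorm_of_hasDerivWithinAt_of_eVariationOn_eq {h h' : ℝ → ℝ} {s : Set ℝ} {t : ℝ}
    (hs : s ∈ 𝓝 t) (hd : ∀ x ∈ s, HasDerivWithinAt h (h' x) s x) (hh' : ContinuousAt h' t)
    (hvar : ∀ u v, u < v → Icc u v ⊆ s → eVariationOn h (Icc u v) = ENNReal.ofReal (v - u)) :
    1 ≤ ‖h' t‖₊ := by
  by_contra! hlt
  obtain ⟨K, hK, hK1⟩ := exists_between hlt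
  have hnear : ∀ᶠ x in 𝓝 t, x ∈ s ∧ ‖h' x‖₊ < K :=
    Filter.Eventually.and hs (hh'.nnnorm.eventually (gt_mem_nhds hK))
  obtain ⟨ε, hε, hball⟩ := Metric.nhds_basis_closedBall.eventually_iff.1 hnear
  rw [Real.closedBall_eq_Icc] at hball
  have hsub : Icc (t - ε) (t + ε) ⊆ s := fun x hx => (hball hx).1
  have hlip : LipschitzOnWith K h (Icc (t - ε) (t + ε)) :=
    (convex_Icc _ _).lipschitzOnWith_of_nnnorm_hasDerivWithin_le
      (fun x hx => (hd x (hsub hx)).mono hsub) fun x hx => (hball hx).2.le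
  exact hK1.not_ge (one_le_of_lipschitzOnWith_of_eVariationOn_eq (by linarith) hlip
    (hvar _ _ (by linarith) hsub))

lemma HasC2ArcLengthParam.strictMonoOn_or_strictAntiOn {g : ℝ → ℝ} {c d : ℝ}
    (hg : HasC2ArcLengthParam g c d) : StrictMonoOn g (Icc c d) ∨ StrictAntiOn g (Icc c d) := by
  obtain ⟨c', d', φ, -, hφm, -, hφim, hvar, G', G'', hG', hG'', -⟩ := hg
  have hcont : ContinuousOn (g ∘ φ) (Icc c' d') := fun x hx => (hG' x hx).continuousWithinAt
  have hderiv : ∀ x ∈ Ioo c' d', HasDerivWithinAt (g ∘ φ) (G' x) (Ioo c' d') x :=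
    fun x hx => (hG' x (Ioo_subset_Icc_self hx)).mono Ioo_subset_Icc_self
  have hG'_ne : ∀ x ∈ Ioo c' d', G' x ≠ 0 := by
    intro x hx hx0
    have hG'x : ContinuousAt G' x :=
      ((hG'' x (Ioo_subset_Icc_self hx)).hasDerivAt (Icc_mem_nhds hx.1 hx.2)).continuousAt
    have := one_le_nnnorm_of_hasDerivWithinAt_of_eVariationOn_eq (isOpen_Ioo.mem_nhds hx)
      hderiv hG'x fun u v huv hsub => hvar u v (hsub (left_mem_Icc.2 huv.le)).1.le huv.le
        (hsub (right_mem_Icc.2 huv.le)).2.le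
    simp [hx0] at this
  rw [← hφim]
  rcases hasDerivWithinAt_forall_lt_or_forall_gt_of_forall_ne (convex_Ioo c' d') hderiv hG'_ne
    with hneg | hpos
  · right
    exact (strictAntiOn_of_hasDerivWithinAt_neg (convex_Icc _ _) hcont
      (by rwa [interior_Icc]) (by rwa [interior_Icc])).image_of_comp hφm.monotoneOn
  · left
    exact (strictMonoOn_of_hasDerivWithinAt_pos (convex_Icc _ _) hcont
      (by rwa [interior_Icc]) (by rwa [interior_Icc])).image_of_comp hφm.monotoneOn

lemma Ioo_subset_Icc_iff_subset_Ioo {a b c d : ℝ} : Ioo c d ⊆ Icc a b ↔ Ioo c d ⊆ Ioo a b := by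
  simpa using ((isOpen_Ioo (a := c) (b := d)).subset_interior_iff (t := Icc a b)).symm

lemma not_exists_Ioo_subset_Icc_of_notMem {x a b : ℝ} (hx : x ∉ Ioo a b) (P : ℝ → ℝ → Prop) :
    ¬ ∃ c d : ℝ, c < d ∧ x ∈ Ioo c d ∧ Ioo c d ⊆ Icc a b ∧ P c d := by
  rintro ⟨c, d, -, hxcd, hcd, -⟩
  exact hx (Ioo_subset_Icc_iff_subset_Ioo.1 hcd hxcd)

lemma exists_hasC2ArcLengthParam_iff {f : ℝ → ℝ} {s : Set ℝ} (hf : ContinuousOn f s) (x : ℝ) :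
    (∃ c d : ℝ, c < d ∧ x ∈ Ioo c d ∧ Ioo c d ⊆ s ∧ HasC2ArcLengthParam f c d) ↔
      ∃ c d : ℝ, c < d ∧ x ∈ Ioo c d ∧ Ioo c d ⊆ s ∧
        (StrictMonoOn f (Ioo c d) ∨ StrictAntiOn f (Ioo c d)) := by
  constructor
  · rintro ⟨c, d, hcd, hx, hs, hC2⟩
    exact ⟨c, d, hcd, hx, hs, hC2.strictMonoOn_or_strictAntiOn.imp
      (·.mono Ioo_subset_Icc_self) (·.mono Ioo_subset_Icc_self)⟩
  · rintro ⟨c, d, -, hx, hs, hmono⟩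
    obtain ⟨a, hca, hax⟩ := exists_between hx.1
    obtain ⟨b, hxb, hbd⟩ := exists_between hx.2
    have hab : Icc a b ⊆ Ioo c d := Icc_subset_Ioo hca hbd
    refine ⟨a, b, hax.trans hxb, ⟨hax, hxb⟩, Ioo_subset_Icc_self.trans (hab.trans hs), ?_⟩
    rcases hmono with hm | hm
    · exact (hm.mono hab).hasC2ArcLengthParam (hax.trans hxb) (hf.mono (hab.trans hs))
    · exact (hm.mono hab).hasC2ArcLengthParam (hax.trans hxb) (hf.mono (hab.trans hs))

lemma not_injOn_Ioo_of_eq_on_Ioo {f : ℝ → ℝ} {x c d c' d' : ℝ} (hx : x ∈ Ioo c d)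
    (hx' : x ∈ Ioo c' d') (hconst : ∀ y ∈ Ioo c d, f y = f x) : ¬ InjOn f (Ioo c' d') := by
  intro hinj
  obtain ⟨y, hy, hyx⟩ := exists_between (max_lt hx.1 hx'.1)
  exact hyx.ne (hinj ⟨(le_max_right _ _).trans_lt hy, hyx.trans hx'.2⟩ hx'
    (hconst y ⟨(le_max_left _ _).trans_lt hy, hyx.trans hx.2⟩))

/-- For a continuous real-valued `f`: a point of `(0,1)` is outside `D_f` iff `f` is
strictly monotone on some open interval around it; moreover `D_f = K_f ∪ E_f`. -/
theorem stmt_17 (f : ℝ → ℝ) (hf : ContinuousOn f (Set.Icc 0 1)) :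
    (∀ x ∈ Set.Ioo (0:ℝ) 1,
      (x ∉ Dset f ↔ ∃ c d : ℝ, c < d ∧ x ∈ Set.Ioo c d ∧
        Set.Ioo c d ⊆ Set.Icc (0:ℝ) 1 ∧
        (StrictMonoOn f (Set.Ioo c d) ∨ StrictAntiOn f (Set.Ioo c d)))) ∧
    Dset f = Kset f ∪ Eset f := by
  have hD : ∀ x ∈ Ioo (0:ℝ) 1, x ∉ Dset f ↔ ∃ c d : ℝ, c < d ∧ x ∈ Ioo c d ∧
      Ioo c d ⊆ Icc 0 1 ∧ (StrictMonoOn f (Ioo c d) ∨ StrictAntiOn f (Ioo c d)) := fun x hx => by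
    rw [Dset, mem_sep_iff, and_iff_right (Ioo_subset_Icc_self hx), not_not]
    exact exists_hasC2ArcLengthParam_iff hf x
  refine ⟨hD, ?_⟩
  ext x
  by_cases hx : x ∈ Ioo (0:ℝ) 1
  · have hconst_mono : (∃ c d : ℝ, c < d ∧ x ∈ Ioo c d ∧ Ioo c d ⊆ Icc 0 1 ∧
        ∀ y ∈ Ioo c d, f y = f x) → ¬ ∃ c d : ℝ, c < d ∧ x ∈ Ioo c d ∧ Ioo c d ⊆ Icc 0 1 ∧
        (StrictMonoOn f (Ioo c d) ∨ StrictAntiOn f (Ioo c d)) := by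
      rintro ⟨c, d, -, hxcd, -, hconst⟩ ⟨c', d', -, hxcd', -, hmono⟩
      exact not_injOn_Ioo_of_eq_on_Ioo hxcd hxcd' hconst
        (hmono.elim StrictMonoOn.injOn StrictAntiOn.injOn)
    rw [← not_not (a := x ∈ Dset f), hD x hx, Kset, Eset, mem_union, mem_sep_iff, mem_sep_iff,
      and_iff_right (Ioo_subset_Icc_self hx), and_iff_right hx]
    simp only [← Ioo_subset_Icc_iff_subset_Ioo, and_or_left, exists_or] at hconst_mono ⊢
    by_cases hC : ∃ c d : ℝ, c < d ∧ x ∈ Ioo c d ∧ Ioo c d ⊆ Icc 0 1 ∧ ∀ y ∈ Ioo c d, f y = f x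
    · simp only [hC, hconst_mono hC, true_or, not_true_eq_false, or_true, not_false_eq_true]
    · simp only [hC, false_or, or_false]
  · rw [Dset, Kset, Eset, mem_union, mem_sep_iff, mem_sep_iff, mem_sep_iff]
    simp only [not_exists_Ioo_subset_Icc_of_notMem hx, hx, not_false_eq_true, and_true,
      false_and, or_false]
end
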